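/- arXiv:2404.10737 — 12 statements merged into one kernel-verified Lean document; each statement's English description precedes it below -/
import Mathlib

section
/- Let f : ℕ → ℝ and let B, K be positive integers. Suppose that for every integer a ≥ B and every integer n with K·a ≤ n ≤ K·(a+1), one has Δ^{n−a}(Δ−1)^{a} f(a) = 0. Then there exist polynomials P₁, P₂ with real coefficients such that f(a) = P₁(a) + P₂(a)·2^a for all integers a ≥ B. -/
/-- Forward difference operator on functions `ℕ → ℝ`: `Δ f a = f (a+1) - f a`. -/
noncomputable def fwdD (f : ℕ → ℝ) : ℕ → ℝ := fun a => f (a + 1) - f a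

/-- The operator `Δ - 1` on functions `ℕ → ℝ`: `(Δ-1) f a = f (a+1) - 2 f a`. -/
noncomputable def fwdDOne (f : ℕ → ℝ) : ℕ → ℝ := fun a => f (a + 1) - 2 * f a

open Polynomial Finset

/-!
Write `c a m = Δ^m (Δ-1)^a f a`. The shift is `1 + Δ` and `(1 + Δ)(Δ - 1) = Δ² - 1`, so
`c a (m + 2) = c (a + 1) m + c a m`; this recurrence spreads the vanishing on the windows
`k a ≤ m ≤ k (a + 1) + 1` (where `K = k + 1`) to all `m ≥ k a`. At `a = B`, Newton's formula turns
`c B m = 0` for `m ≥ k B` into `Δ^(kB) (Δ-1)^B f = 0` on `[B, ∞)`.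

Since `X^m` and `(X - 1)^n` are coprime, the kernel of `Δ^m (Δ-1)^n` is the sum of the kernels of
`Δ^m` and of `(Δ-1)^n`. The first consists of polynomials (Newton's formula again), and
`(Δ-1)^n (2^x h) = 2^(x+n) Δ^n h` identifies the second with `2^x` times polynomials.
-/

lemma fwdD_eq_fwdDiff : fwdD = fwdDiff 1 := rfl

noncomputable def fwdDₗ : Module.End ℝ (ℕ → ℝ) where
  toFun := fwdD
  map_add' f g := by ext; simp only [fwdD, Pi.add_apply]; ring
  map_smul' c f := by ext; simp only [fwdD, Pi.smul_apply, smul_eq_mul, RingHom.id_apply]; ring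

lemma coe_fwdDₗ_pow (m : ℕ) : ⇑(fwdDₗ ^ m) = fwdD^[m] := Module.End.coe_pow fwdDₗ m

lemma coe_fwdDₗ_sub_one_pow (n : ℕ) : ⇑((fwdDₗ - 1) ^ n) = fwdDOne^[n] := by
  have : ⇑(fwdDₗ - 1) = fwdDOne := by
    funext g x
    simp only [LinearMap.sub_apply, Module.End.one_apply, Pi.sub_apply, fwdDOne]
    change g (x + 1) - g x - g x = _
    ring
  rw [Module.End.coe_pow, this]

lemma eq_zero_of_forall_fwdD_iterate_eq_zero {g : ℕ → ℝ} {B : ℕ} (h : ∀ j, fwdD^[j] g B = 0)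
    (x : ℕ) : g (B + x) = 0 := by
  simpa [← fwdD_eq_fwdDiff, h] using shift_eq_sum_fwdDiff_iter 1 g x B

lemma exists_polynomial_of_fwdD_iterate_eq_zero {g : ℕ → ℝ} {m : ℕ} (h : fwdD^[m] g = 0) :
    ∃ P : ℝ[X], ∀ x : ℕ, g x = P.eval (x : ℝ) := by
  -- Newton's series `g x = ∑ j < m, Δ^j g 0 * x.choose j`, where `x.choose j` is the value at `x`
  -- of the falling factorial polynomial divided by `j!`.
  refine ⟨∑ j ∈ range m, C (fwdD^[j] g 0 / j.factorial) * descPochhammer ℝ j, fun x => ?_⟩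
  have hchoose (j : ℕ) : (descPochhammer ℝ j).eval (x : ℝ) / j.factorial = x.choose j := by
    rw [descPochhammer_eval_eq_descFactorial, Nat.descFactorial_eq_factorial_mul_choose]
    push_cast
    field_simp
  have hhigh (j : ℕ) (hj : m ≤ j) : fwdD^[j] g 0 = 0 := by
    obtain ⟨i, rfl⟩ := Nat.exists_eq_add_of_le hj
    rw [add_comm, Function.iterate_add_apply, h, ← coe_fwdDₗ_pow, map_zero]; rfl
  have hnewton := shift_eq_sum_fwdDiff_iter 1 g x 0
  simp only [zero_add, smul_eq_mul, mul_one, ← fwdD_eq_fwdDiff] at hnewton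
  rw [hnewton, eval_finsetSum]
  calc ∑ j ∈ range (x + 1), x.choose j • fwdD^[j] g 0
      = ∑ j ∈ range (x + 1 + m), x.choose j • fwdD^[j] g 0 :=
        sum_subset (range_subset_range.2 (by omega)) fun j _ hj => by
          rw [mem_range, not_lt] at hj
          rw [Nat.choose_eq_zero_of_lt (by omega), zero_smul]
    _ = ∑ j ∈ range m, x.choose j • fwdD^[j] g 0 :=
        (sum_subset (range_subset_range.2 (by omega)) fun j _ hj => by
          rw [mem_range, not_lt] at hj
          rw [hhigh j hj, smul_zero]).symm
    _ = _ := sum_congr rfl fun j _ => by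
        rw [eval_mul, eval_C, nsmul_eq_mul, ← hchoose]
        ring

lemma fwdDOne_iterate_two_pow_mul (h : ℕ → ℝ) (n : ℕ) :
    fwdDOne^[n] (fun x => 2 ^ x * h x) = fun x => 2 ^ (x + n) * fwdD^[n] h x := by
  induction n with
  | zero => rfl
  | succ n ih =>
    funext x
    rw [Function.iterate_succ_apply', ih, Function.iterate_succ_apply']
    simp only [fwdDOne, fwdD]
    ring

theorem exists_polynomials_of_fwdD_fwdDOne_iterate_eq_zero {g : ℕ → ℝ} {m n : ℕ}
    (h : fwdD^[m] (fwdDOne^[n] g) = 0) :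
    ∃ P₁ P₂ : ℝ[X], ∀ x : ℕ, g x = P₁.eval (x : ℝ) + P₂.eval (x : ℝ) * 2 ^ x := by
  have hcop : IsCoprime (X ^ m : ℝ[X]) ((X - 1) ^ n) :=
    (show IsCoprime (X : ℝ[X]) (X - 1 : ℝ[X]) from ⟨1, -1, by ring⟩).pow
  have hg : g ∈ LinearMap.ker (aeval fwdDₗ (X ^ m * (X - 1) ^ n : ℝ[X])) := by
    rw [LinearMap.mem_ker, map_mul, map_pow, map_pow, aeval_X, map_sub, aeval_X, map_one,
      Module.End.mul_apply, coe_fwdDₗ_pow, coe_fwdDₗ_sub_one_pow, h]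
  rw [← sup_ker_aeval_eq_ker_aeval_mul_of_coprime _ hcop] at hg
  obtain ⟨g₁, hg₁, g₂, hg₂, rfl⟩ := Submodule.mem_sup.1 hg
  rw [LinearMap.mem_ker, map_pow, aeval_X, coe_fwdDₗ_pow] at hg₁
  rw [LinearMap.mem_ker, map_pow, map_sub, aeval_X, map_one, coe_fwdDₗ_sub_one_pow] at hg₂
  obtain ⟨P₁, hP₁⟩ := exists_polynomial_of_fwdD_iterate_eq_zero hg₁
  have hg₂_eq : g₂ = fun x => 2 ^ x * (g₂ x / 2 ^ x) := by
    funext x; field_simp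
  rw [hg₂_eq, fwdDOne_iterate_two_pow_mul] at hg₂
  obtain ⟨P₂, hP₂⟩ := exists_polynomial_of_fwdD_iterate_eq_zero (g := fun x => g₂ x / 2 ^ x)
    (m := n) (funext fun x => by simpa using congr_fun hg₂ x)
  refine ⟨P₁, P₂, fun x => ?_⟩
  rw [Pi.add_apply, hP₁, ← hP₂]
  field_simp

theorem exists_polynomials_of_fwdD_fwdDOne_iterate_eq_zero_on_Ici {g : ℕ → ℝ} {m n B : ℕ}
    (h : ∀ x, B ≤ x → fwdD^[m] (fwdDOne^[n] g) x = 0) :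
    ∃ P₁ P₂ : ℝ[X], ∀ x, B ≤ x → g x = P₁.eval (x : ℝ) + P₂.eval (x : ℝ) * 2 ^ x := by
  set shift : (ℕ → ℝ) → ℕ → ℝ := fun G r => G (r + B)
  have hD : Function.Commute fwdD shift := fun G => by
    funext r; simp only [shift, fwdD, add_right_comm]
  have hDOne : Function.Commute fwdDOne shift := fun G => by
    funext r; simp only [shift, fwdDOne, add_right_comm]
  obtain ⟨P₁, P₂, hP⟩ := exists_polynomials_of_fwdD_fwdDOne_iterate_eq_zero (g := shift g)
    (m := m) (n := n) <| funext fun r => by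
      rw [(hDOne.iterate_left n).eq, (hD.iterate_left m).eq]
      exact h _ (Nat.le_add_left B r)
  refine ⟨P₁.comp (X - C (B : ℝ)), C (2 ^ B)⁻¹ * P₂.comp (X - C (B : ℝ)), fun x hx => ?_⟩
  obtain ⟨y, rfl⟩ := Nat.exists_eq_add_of_le' hx
  simp only [shift] at hP
  rw [hP y]
  simp only [eval_comp, eval_mul, eval_sub, eval_X, eval_C, Nat.cast_add, add_sub_cancel_right,
    pow_add]
  field_simp

lemma eq_zero_of_eq_zero_on_window {M : Type*} [AddZeroClass M] {c : ℕ → ℕ → M} {B k : ℕ}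
    (hrec : ∀ a m, c a (m + 2) = c (a + 1) m + c a m)
    (hwin : ∀ a, B ≤ a → ∀ m, k * a ≤ m → m ≤ k * (a + 1) + 1 → c a m = 0)
    (a : ℕ) (ha : B ≤ a) (m : ℕ) (hm : k * a ≤ m) : c a m = 0 := by
  induction m using Nat.strong_induction_on generalizing a with
  | _ m ih =>
  rcases le_or_gt m (k * (a + 1) + 1) with hle | hgt
  · exact hwin a ha m hm hle
  obtain ⟨m', rfl⟩ : ∃ m', m = m' + 2 := ⟨m - 2, by omega⟩
  have hka : k * a ≤ k * (a + 1) := Nat.mul_le_mul_left k (Nat.le_succ a)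
  rw [hrec, ih m' (by omega) (a + 1) (by omega) (by omega), ih m' (by omega) a ha (by omega),
    add_zero]

lemma fwdD_iterate_add_two_fwdDOne_iterate (f : ℕ → ℝ) (a m : ℕ) :
    fwdD^[m + 2] (fwdDOne^[a] f) a =
      fwdD^[m] (fwdDOne^[a + 1] f) (a + 1) + fwdD^[m] (fwdDOne^[a] f) a := by
  set F := fwdDOne^[a] f
  have hstep (j x : ℕ) : fwdD^[j + 1] F x = fwdD^[j] F (x + 1) - fwdD^[j] F x := by
    rw [Function.iterate_succ_apply']; rfl
  have hone : fwdDOne F = fwdD F - F := by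
    funext x; simp only [fwdDOne, fwdD, Pi.sub_apply]; ring
  rw [Function.iterate_succ_apply' fwdDOne, hone, ← coe_fwdDₗ_pow m, map_sub, coe_fwdDₗ_pow,
    ← Function.iterate_succ_apply fwdD, Pi.sub_apply, hstep (m + 1) a, hstep m a]
  ring

theorem stmt0_general (f : ℕ → ℝ) (B K : ℕ) (hK : 1 ≤ K)
    (h : ∀ a : ℕ, B ≤ a → ∀ n : ℕ, K * a ≤ n → n ≤ K * (a + 1) →
      fwdD^[n - a] (fwdDOne^[a] f) a = 0) :
    ∃ P₁ P₂ : Polynomial ℝ, ∀ a : ℕ, B ≤ a →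
      f a = P₁.eval (a : ℝ) + P₂.eval (a : ℝ) * 2 ^ a := by
  obtain ⟨k, rfl⟩ : ∃ k, K = k + 1 := ⟨K - 1, by omega⟩
  have hwindow : ∀ a, B ≤ a → ∀ m, k * a ≤ m → m ≤ k * (a + 1) + 1 →
      fwdD^[m] (fwdDOne^[a] f) a = 0 := fun a ha m h₁ h₂ => by
    simpa using h a ha (m + a) (by rw [add_mul]; omega) (by rw [add_mul]; omega)
  have hdiff : ∀ j, fwdD^[j] (fwdD^[k * B] (fwdDOne^[B] f)) B = 0 := fun j => by
    rw [← Function.iterate_add_apply]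
    exact eq_zero_of_eq_zero_on_window (fwdD_iterate_add_two_fwdDOne_iterate f) hwindow B le_rfl
      _ (Nat.le_add_left _ _)
  refine exists_polynomials_of_fwdD_fwdDOne_iterate_eq_zero_on_Ici (m := k * B) (n := B)
    fun x hx => ?_
  obtain ⟨y, rfl⟩ := Nat.exists_eq_add_of_le hx
  exact eq_zero_of_forall_fwdD_iterate_eq_zero hdiff y

theorem stmt0 (f : ℕ → ℝ) (B K : ℕ) (hB : 1 ≤ B) (hK : 1 ≤ K)
    (h : ∀ a : ℕ, B ≤ a → ∀ n : ℕ, K * a ≤ n → n ≤ K * (a + 1) →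
      fwdD^[n - a] (fwdDOne^[a] f) a = 0) :
    ∃ P₁ P₂ : Polynomial ℝ, ∀ a : ℕ, B ≤ a →
      f a = P₁.eval (a : ℝ) + P₂.eval (a : ℝ) * 2 ^ a :=
  stmt0_general f B K hK h
end

section
/- Let f : ℕ → ℝ and let B, K be positive integers. Suppose that f(a) ∈ ℤ for all integers a ≥ B, and that for every integer a ≥ B and every integer n with K·a ≤ n ≤ K·(a+1), one has Δ^{n−a}(Δ−1)^{a} f(a) = 0. Then there exist polynomials P₁, P₂ with rational coefficients such that f(a) = P₁(a) + P₂(a)·2^a for all integers a ≥ B. -/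
open Polynomial Finset Function Set

section PolyFwdDiff

variable {R : Type*} [CommRing R]

noncomputable def polyFwdDiff (p : R[X]) : R[X] := p.comp (X + 1) - p

@[simp]
lemma eval_polyFwdDiff (p : R[X]) (x : R) :
    (polyFwdDiff p).eval x = p.eval (x + 1) - p.eval x := by
  simp [polyFwdDiff]

lemma eval_polyFwdDiff_iterate (k : ℕ) (p : R[X]) :
    (fun x => (polyFwdDiff^[k] p).eval x) = (fwdDiff 1)^[k] (fun x => p.eval x) := by
  induction k with
  | zero => rfl
  | succ k ih =>
    funext x
    rw [iterate_succ_apply', iterate_succ_apply', ← ih]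
    simp [fwdDiff]

lemma polyFwdDiff_iterate_natDegree_add_one [IsDomain R] [Infinite R] (p : R[X]) :
    polyFwdDiff^[p.natDegree + 1] p = 0 :=
  Polynomial.funext fun x => by
    simpa using congrFun ((eval_polyFwdDiff_iterate _ p).trans
      p.fwdDiff_iter_degree_add_one_eq_zero) x

/-- `Δ` is nilpotent on polynomials, so `Δ - 1` is inverted by `-(1 + Δ + Δ² + ⋯)`. -/
lemma exists_polyFwdDiff_sub_self_eq [IsDomain R] [Infinite R] (q : R[X]) :
    ∃ p : R[X], polyFwdDiff p - p = q := by
  set s := ∑ k ∈ range (q.natDegree + 1), polyFwdDiff^[k] q with hs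
  refine ⟨-s, ?_⟩
  calc polyFwdDiff (-s) - -s
      = ∑ k ∈ range (q.natDegree + 1), (polyFwdDiff^[k] q - polyFwdDiff^[k + 1] q) := by
        simp only [hs, polyFwdDiff, neg_comp, Polynomial.sum_comp, iterate_succ_apply',
          sum_sub_distrib]
        ring
    _ = q := by rw [sum_range_sub', polyFwdDiff_iterate_natDegree_add_one, iterate_zero_apply,
        sub_zero]

end PolyFwdDiff

lemma exists_polyFwdDiff_eq (q : ℚ[X]) : ∃ p : ℚ[X], polyFwdDiff p = q := by
  refine ⟨∑ i ∈ range (q.natDegree + 1), C (q.coeff i / (i + 1)) * Polynomial.bernoulli (i + 1),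
    ?_⟩
  conv_rhs => rw [q.as_sum_range_C_mul_X_pow]
  simp only [polyFwdDiff, Polynomial.sum_comp, ← sum_sub_distrib]
  refine sum_congr rfl fun i _ => ?_
  rw [mul_comp, C_comp, add_comm X 1, bernoulli_comp_one_add_X, ← mul_sub, add_sub_cancel_left,
    nsmul_eq_mul, ← mul_assoc, ← C_eq_natCast, ← C_mul]
  congr 2
  push_cast
  field_simp

lemma commute_fwdD_fwdDOne : Function.Commute fwdD fwdDOne := by
  intro g
  funext x
  simp only [fwdD, fwdDOne]
  ring

lemma fwdD_iterate_fwdDOne_apply_succ (g : ℕ → ℝ) (m x : ℕ) :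
    fwdD^[m] (fwdDOne g) (x + 1) = fwdD^[m + 2] g x - fwdD^[m] g x := by
  rw [(commute_fwdD_fwdDOne.iterate_left m) g, iterate_succ_apply', iterate_succ_apply']
  simp only [fwdD, fwdDOne]
  ring

lemma fwdD_iterate_fwdDOne_iterate_eq_zero {f : ℕ → ℝ} {B K : ℕ} (hK : 1 ≤ K)
    (h : ∀ a : ℕ, B ≤ a → ∀ n : ℕ, K * a ≤ n → n ≤ K * (a + 1) →
      fwdD^[n - a] (fwdDOne^[a] f) a = 0) (m : ℕ) :
    ∀ a, B ≤ a → K * a ≤ m + a → fwdD^[m] (fwdDOne^[a] f) a = 0 := by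
  induction m using Nat.strong_induction_on with
  | _ m ih =>
    intro a ha hm
    rcases le_or_gt (m + a) (K * (a + 1)) with hle | hgt
    · simpa using h a ha (m + a) hm hle
    · rw [mul_add, mul_one] at hgt
      have hKa : a ≤ K * a := Nat.le_mul_of_pos_left a hK
      obtain ⟨m, rfl⟩ : ∃ m', m = m' + 2 := ⟨m - 2, by omega⟩
      have hrec := fwdD_iterate_fwdDOne_apply_succ (fwdDOne^[a] f) m a
      rw [← iterate_succ_apply' fwdDOne,
        ih m (by omega) (a + 1) (by omega) (by rw [mul_add, mul_one]; omega),
        ih m (by omega) a ha (by omega)] at hrec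
      linarith

lemma fwdD_iterate_apply_eq_zero_of_forall_ge {g : ℕ → ℝ} {B N : ℕ}
    (h : ∀ m, N ≤ m → fwdD^[m] g B = 0) (x : ℕ) (hx : B ≤ x) : fwdD^[N] g x = 0 := by
  obtain ⟨n, rfl⟩ := Nat.exists_eq_add_of_le hx
  have newton :
      fwdD^[N] g (B + n) = ∑ k ∈ range (n + 1), n.choose k • fwdD^[k] (fwdD^[N] g) B := by
    have := shift_eq_sum_fwdDiff_iter 1 (fwdD^[N] g) n B
    rwa [smul_eq_mul, mul_one] at this
  rw [newton]
  refine sum_eq_zero fun k _ => ?_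
  rw [← iterate_add_apply, h (k + N) (by omega), smul_zero]

lemma of_iterate_of_mapsTo {α : Type*} {T : α → α} {s : Set α} {p : α → Prop}
    (hT : MapsTo T s s) (hp : ∀ x ∈ s, p (T x) → p x) (n : ℕ) :
    ∀ x ∈ s, p (T^[n] x) → p x := by
  induction n with
  | zero => exact fun x _ hx => hx
  | succ n ih => exact fun x hx hn => hp x hx (ih (T x) (hT hx) (by rwa [← iterate_succ_apply]))

section Subgroup

variable (S : AddSubgroup ℝ) (B : ℕ)

lemma mapsTo_fwdD : MapsTo fwdD ((Ici B).pi fun _ => S) ((Ici B).pi fun _ => S) :=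
  fun _ hg x hx => sub_mem (hg (x + 1) (Nat.le_succ_of_le hx)) (hg x hx)

lemma mapsTo_fwdDOne : MapsTo fwdDOne ((Ici B).pi fun _ => S) ((Ici B).pi fun _ => S) :=
  fun _ hg x hx => sub_mem (hg (x + 1) (Nat.le_succ_of_le hx)) <| by
    rw [two_mul]; exact add_mem (hg x hx) (hg x hx)

end Subgroup

lemma eqOn_Ici_of_apply_succ_sub_mul_eq {g g' : ℕ → ℝ} {B : ℕ} (c : ℝ) (h₀ : g B = g' B)
    (hrec : ∀ x, B ≤ x → g (x + 1) - c * g x = g' (x + 1) - c * g' x) :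
    EqOn g g' (Ici B) := by
  intro x hx
  induction x, hx using Nat.le_induction with
  | base => exact h₀
  | succ x hx ih => linear_combination hrec x hx + c * ih

def ratValuedFrom (B : ℕ) : Set (ℕ → ℝ) :=
  (Ici B).pi fun _ => ((Rat.castHom ℝ).range.toAddSubgroup : Set ℝ)

def IsRatPolyFrom (B : ℕ) (g : ℕ → ℝ) : Prop :=
  ∃ P : ℚ[X], ∀ x, B ≤ x → g x = ((P.eval (x : ℚ) : ℚ) : ℝ)

def IsRatPolyExpFrom (B : ℕ) (g : ℕ → ℝ) : Prop :=
  ∃ P₁ P₂ : ℚ[X], ∀ x, B ≤ x →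
    g x = ((P₁.eval (x : ℚ) : ℚ) : ℝ) + ((P₂.eval (x : ℚ) : ℚ) : ℝ) * 2 ^ x

lemma IsRatPolyFrom.of_fwdD {g : ℕ → ℝ} {B : ℕ} {q : ℚ} (hq : g B = q)
    (h : IsRatPolyFrom B (fwdD g)) : IsRatPolyFrom B g := by
  obtain ⟨P, hP⟩ := h
  obtain ⟨R, hR⟩ := exists_polyFwdDiff_eq P
  set R' := R + C (q - R.eval (B : ℚ))
  refine ⟨R', fun x hx => ?_⟩
  refine eqOn_Ici_of_apply_succ_sub_mul_eq (g' := fun n : ℕ => ((R'.eval (n : ℚ) : ℚ) : ℝ))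
    1 (by simp [R', hq]) (fun y hy => ?_) hx
  have hRy := congrArg (fun p => ((p.eval (y : ℚ) : ℚ) : ℝ)) hR
  have hPy := hP y hy
  simp only [eval_polyFwdDiff] at hRy
  simp only [fwdD] at hPy
  simp only [R', eval_add, eval_C]
  push_cast at hRy ⊢
  linear_combination hPy - hRy

lemma IsRatPolyExpFrom.of_fwdDOne {g : ℕ → ℝ} {B : ℕ} {q : ℚ} (hq : g B = q)
    (h : IsRatPolyExpFrom B (fwdDOne g)) : IsRatPolyExpFrom B g := by
  obtain ⟨P₁, P₂, hP⟩ := h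
  obtain ⟨R₁, hR₁⟩ := exists_polyFwdDiff_sub_self_eq P₁
  obtain ⟨R₂, hR₂⟩ := exists_polyFwdDiff_eq (C (1 / 2) * P₂)
  set R₂' := R₂ + C ((q - R₁.eval (B : ℚ)) / 2 ^ B - R₂.eval (B : ℚ))
  refine ⟨R₁, R₂', fun x hx => ?_⟩
  refine eqOn_Ici_of_apply_succ_sub_mul_eq
    (g' := fun n : ℕ => ((R₁.eval (n : ℚ) : ℚ) : ℝ) + ((R₂'.eval (n : ℚ) : ℚ) : ℝ) * 2 ^ n)
    2 ?_ (fun y hy => ?_) hx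
  · simp only [hq, R₂', eval_add, eval_C]
    push_cast
    field_simp
    ring
  · have hR₁y := congrArg (fun p => ((p.eval (y : ℚ) : ℚ) : ℝ)) hR₁
    have hR₂y := congrArg (fun p => ((p.eval (y : ℚ) : ℚ) : ℝ)) hR₂
    have hPy := hP y hy
    simp only [eval_polyFwdDiff, eval_sub, eval_mul, eval_C] at hR₁y hR₂y
    simp only [fwdDOne] at hPy
    simp only [R₂', eval_add, eval_C]
    push_cast at hR₁y hR₂y ⊢
    linear_combination hPy - hR₁y - 2 ^ (y + 1) * hR₂y

lemma IsRatPolyFrom.of_fwdD_iterate_eq_zero {g : ℕ → ℝ} {B N : ℕ} (hg : g ∈ ratValuedFrom B)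
    (h : ∀ x, B ≤ x → fwdD^[N] g x = 0) : IsRatPolyFrom B g := by
  refine of_iterate_of_mapsTo (mapsTo_fwdD _ B) (fun g hg hP => ?_) N g hg ⟨0, by simpa using h⟩
  obtain ⟨q, hq⟩ := hg B self_mem_Ici
  exact hP.of_fwdD hq.symm

lemma IsRatPolyExpFrom.of_fwdDOne_iterate {g : ℕ → ℝ} {B : ℕ} (n : ℕ)
    (hg : g ∈ ratValuedFrom B) (h : IsRatPolyExpFrom B (fwdDOne^[n] g)) :
    IsRatPolyExpFrom B g := by
  refine of_iterate_of_mapsTo (mapsTo_fwdDOne _ B) (fun g hg hP => ?_) n g hg h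
  obtain ⟨q, hq⟩ := hg B self_mem_Ici
  exact hP.of_fwdDOne hq.symm

theorem stmt1_general (f : ℕ → ℝ) (B K : ℕ) (hK : 1 ≤ K)
    (hint : ∀ a : ℕ, B ≤ a → ∃ m : ℤ, f a = (m : ℝ))
    (h : ∀ a : ℕ, B ≤ a → ∀ n : ℕ, K * a ≤ n → n ≤ K * (a + 1) →
      fwdD^[n - a] (fwdDOne^[a] f) a = 0) :
    ∃ P₁ P₂ : Polynomial ℚ, ∀ a : ℕ, B ≤ a →
      f a = ((P₁.eval (a : ℚ) : ℚ) : ℝ) + ((P₂.eval (a : ℚ) : ℚ) : ℝ) * 2 ^ a := by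
  have hf : f ∈ ratValuedFrom B := fun a ha => by
    obtain ⟨m, hm⟩ := hint a ha
    exact ⟨m, by simp [hm]⟩
  have hvanish : ∀ x, B ≤ x → fwdD^[K * B - B] (fwdDOne^[B] f) x = 0 :=
    fwdD_iterate_apply_eq_zero_of_forall_ge fun m hm =>
      fwdD_iterate_fwdDOne_iterate_eq_zero hK h m B le_rfl (by omega)
  obtain ⟨P, hP⟩ :=
    IsRatPolyFrom.of_fwdD_iterate_eq_zero ((mapsTo_fwdDOne _ B).iterate B hf) hvanish
  exact IsRatPolyExpFrom.of_fwdDOne_iterate B hf ⟨P, 0, by simpa using hP⟩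

theorem stmt1 (f : ℕ → ℝ) (B K : ℕ) (hB : 1 ≤ B) (hK : 1 ≤ K)
    (hint : ∀ a : ℕ, B ≤ a → ∃ m : ℤ, f a = (m : ℝ))
    (h : ∀ a : ℕ, B ≤ a → ∀ n : ℕ, K * a ≤ n → n ≤ K * (a + 1) →
      fwdD^[n - a] (fwdDOne^[a] f) a = 0) :
    ∃ P₁ P₂ : Polynomial ℚ, ∀ a : ℕ, B ≤ a →
      f a = ((P₁.eval (a : ℚ) : ℚ) : ℝ) + ((P₂.eval (a : ℚ) : ℚ) : ℝ) * 2 ^ a :=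
  stmt1_general f B K hK hint h
end

section
/- Fix a positive integer a. For k = 0, …, a let G_k be the real polynomial in two variables x, y given by G_k(x,y) = ∏_{q=0}^{k−1}(1 + x + q·y) · ∏_{q=k}^{a−1}(1 − q·y), where a product over an empty range equals 1, and set H = ∑_{k=0}^{a} (−1)^{a−k} (a choose k) · G_k. Write A_{μ,ν} for the coefficient of x^μ y^ν in H. Then for all natural numbers μ, ν: if μ + 2ν < a then A_{μ,ν} = 0, and |A_{μ,ν}| ≤ 6^a · a^ν. -/
open MvPolynomial

/-- The polynomial `G(k, x, y) = ∏_{0 ≤ q ≤ k-1} (1 + x + q y) · ∏_{k ≤ q ≤ a-1} (1 - q y)`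
in `ℝ[x, y]`, with `x = X 0` and `y = X 1`. -/
noncomputable def Gpoly (a k : ℕ) : MvPolynomial (Fin 2) ℝ :=
  (∏ q ∈ Finset.range k, (1 + X 0 + C (q : ℝ) * X 1)) *
  (∏ q ∈ Finset.Ico k a, (1 - C (q : ℝ) * X 1))

/-- `H = Δ^a G(0, x, y) = ∑_{k=0}^{a} (-1)^{a-k} (a choose k) G(k, x, y)`. -/
noncomputable def Hpoly (a : ℕ) : MvPolynomial (Fin 2) ℝ :=
  ∑ k ∈ Finset.range (a + 1), C ((-1 : ℝ) ^ (a - k) * (a.choose k)) * Gpoly a k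

/-!
Bound: each factor `1 + x + q y` or `1 - q y` (`0 ≤ q < a`) of `G_k` is dominated coefficientwise in
absolute value by `1 + x + a y`, so `|coeff H| ≤ 2^a · coeff (1 + x + a y)^a`. A coefficient of a
polynomial with nonnegative coefficients is at most its value at a nonnegative point divided by
the corresponding monomial; at `(1, 1/a)` this gives `3^a a^ν`.

Vanishing: `H = Δ^a G(0)` for the forward difference `Δ` in `k`. Give `x` weight 1 and `y` weight 2,
and let `G_b(k)` be `G(k)` without the factors `1 - q y` for `k ≤ q < k + b`. Then
`Δ G_b(k) = (x + (b + 2k) y) G_{b+1}(k)`, a factor of weighted order `≥ 1` whose slope in `k` has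
order `≥ 2`. With the Leibniz rule `Δ^{n+1}(k f) = k Δ^{n+1} f + (n+1) Δ^n f(· + 1)` this shows by
induction on `n` that `Δ^n G_b` has weighted order `≥ n`.
-/

open Finset fwdDiff

namespace MvPolynomial

section Majorization

variable {σ R : Type*} [CommRing R] [LinearOrder R] [IsStrictOrderedRing R]

def CoeffMajorized (p q : MvPolynomial σ R) : Prop :=
  ∀ m, |coeff m p| ≤ coeff m q

namespace CoeffMajorized

variable {p p' q q' : MvPolynomial σ R}

lemma coeff_nonneg (h : CoeffMajorized p q) (m : σ →₀ ℕ) : 0 ≤ coeff m q :=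
  (abs_nonneg _).trans (h m)

lemma monomial {c d : R} (hcd : |c| ≤ d) (s : σ →₀ ℕ) :
    CoeffMajorized (monomial s c) (monomial s d) := by
  classical
  intro m
  simp only [coeff_monomial]
  split_ifs <;> simp [hcd]

lemma one : CoeffMajorized (1 : MvPolynomial σ R) 1 := by
  simpa using CoeffMajorized.monomial (abs_one (α := R)).le 0

lemma add (h : CoeffMajorized p q) (h' : CoeffMajorized p' q') :
    CoeffMajorized (p + p') (q + q') := fun m => by
  simpa only [coeff_add] using (abs_add_le _ _).trans (add_le_add (h m) (h' m))

lemma sub (h : CoeffMajorized p q) (h' : CoeffMajorized p' q') :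
    CoeffMajorized (p - p') (q + q') := fun m => by
  simpa only [coeff_sub, coeff_add] using (abs_sub _ _).trans (add_le_add (h m) (h' m))

lemma C_mul (h : CoeffMajorized p q) (c : R) : CoeffMajorized (C c * p) (C |c| * q) := fun m => by
  simpa only [coeff_C_mul, abs_mul] using mul_le_mul_of_nonneg_left (h m) (abs_nonneg c)

lemma mul (h : CoeffMajorized p q) (h' : CoeffMajorized p' q') :
    CoeffMajorized (p * p') (q * q') := fun m => by
  classical
  simp only [coeff_mul]
  refine (abs_sum_le_sum_abs _ _).trans (sum_le_sum fun x _ => ?_)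
  rw [abs_mul]
  exact mul_le_mul (h _) (h' _) (abs_nonneg _) (h.coeff_nonneg _)

lemma sum {ι : Type*} (s : Finset ι) {f g : ι → MvPolynomial σ R}
    (h : ∀ i ∈ s, CoeffMajorized (f i) (g i)) :
    CoeffMajorized (∑ i ∈ s, f i) (∑ i ∈ s, g i) := fun m => by
  simp only [coeff_sum]
  exact (abs_sum_le_sum_abs _ _).trans (sum_le_sum fun i hi => h i hi m)

lemma prod {ι : Type*} (s : Finset ι) {f g : ι → MvPolynomial σ R}
    (h : ∀ i ∈ s, CoeffMajorized (f i) (g i)) :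
    CoeffMajorized (∏ i ∈ s, f i) (∏ i ∈ s, g i) := by
  induction s using Finset.cons_induction with
  | empty => simpa using one
  | cons i s hi ih =>
    rw [prod_cons, prod_cons]
    exact (h i (mem_cons_self i s)).mul (ih fun j hj => h j (mem_cons_of_mem hj))

lemma pow (h : CoeffMajorized p q) (n : ℕ) : CoeffMajorized (p ^ n) (q ^ n) := by
  simpa using prod (range n) fun _ _ => h

end CoeffMajorized

lemma coeffMajorized_one_add_X_add_C_mul_X {q c : R} (hqc : |q| ≤ c) (i j : σ) :
    CoeffMajorized (1 + X i + C q * X j) (1 + X i + C c * X j) := by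
  simp only [C_mul_X_eq_monomial]
  exact (CoeffMajorized.one.add (CoeffMajorized.monomial (abs_one (α := R)).le _)).add
    (CoeffMajorized.monomial hqc _)

lemma coeffMajorized_one_sub_C_mul_X {q c : R} (hqc : |q| ≤ c) (i j : σ) :
    CoeffMajorized (1 - C q * X j) (1 + X i + C c * X j) := by
  have h0 : CoeffMajorized (0 : MvPolynomial σ R) (X i) := by
    have h := CoeffMajorized.monomial (c := (0 : R)) (d := 1) (by simp) (Finsupp.single i 1)
    rwa [map_zero] at h
  simpa only [add_zero] using (CoeffMajorized.one.add h0).sub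
    (by simpa only [C_mul_X_eq_monomial] using CoeffMajorized.monomial hqc _)

lemma coeff_mul_prod_pow_le_eval [Fintype σ] {p : MvPolynomial σ R} (hp : ∀ m, 0 ≤ coeff m p)
    {z : σ → R} (hz : ∀ i, 0 ≤ z i) (m : σ →₀ ℕ) :
    coeff m p * ∏ i, z i ^ m i ≤ eval z p := by
  have hterm : ∀ d, 0 ≤ coeff d p * ∏ i, z i ^ d i := fun d =>
    mul_nonneg (hp d) (prod_nonneg fun i _ => pow_nonneg (hz i) _)
  rw [eval_eq']
  by_cases hm : m ∈ p.support
  · exact single_le_sum (fun d _ => hterm d) hm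
  · rw [notMem_support_iff.mp hm, zero_mul]
    exact sum_nonneg fun d _ => hterm d

end Majorization

end MvPolynomial

lemma coeff_one_add_X_add_C_mul_X_pow_le {K : Type*} [Field K] [LinearOrder K]
    [IsStrictOrderedRing K] {c : K} (hc : 0 < c) (n μ ν : ℕ) :
    coeff (Finsupp.single 0 μ + Finsupp.single 1 ν)
      ((1 + X 0 + C c * X 1 : MvPolynomial (Fin 2) K) ^ n) ≤ 3 ^ n * c ^ ν := by
  have hmaj := (coeffMajorized_one_add_X_add_C_mul_X (abs_of_pos hc).le (0 : Fin 2) 1).pow n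
  have h := coeff_mul_prod_pow_le_eval hmaj.coeff_nonneg (z := ![1, c⁻¹])
    (by simp [Fin.forall_fin_two, hc.le]) (Finsupp.single 0 μ + Finsupp.single 1 ν)
  have hmonomial :
      ∏ i, ![1, c⁻¹] i ^ (Finsupp.single 0 μ + Finsupp.single 1 ν : Fin 2 →₀ ℕ) i = (c ^ ν)⁻¹ := by
    simp [Fin.prod_univ_two]
  have heval : eval ![1, c⁻¹] ((1 + X 0 + C c * X 1 : MvPolynomial (Fin 2) K) ^ n) = 3 ^ n := by
    norm_num [hc.ne']
  rwa [hmonomial, heval, ← div_eq_mul_inv, div_le_iff₀ (pow_pos hc ν)] at h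

lemma coeffMajorized_Gpoly {a k : ℕ} (hk : k ≤ a) :
    CoeffMajorized (Gpoly a k) ((1 + X 0 + C (a : ℝ) * X 1) ^ a) := by
  have hqa : ∀ q ∈ range a, |(q : ℝ)| ≤ a := fun q hq => by
    rw [abs_of_nonneg q.cast_nonneg]; exact_mod_cast (mem_range.mp hq).le
  have hsplit : (1 + X 0 + C (a : ℝ) * X 1 : MvPolynomial (Fin 2) ℝ) ^ a =
      (∏ _q ∈ range k, (1 + X 0 + C (a : ℝ) * X 1)) *
        ∏ _q ∈ Ico k a, (1 + X 0 + C (a : ℝ) * X 1) := by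
    rw [prod_const, prod_const, card_range, Nat.card_Ico, ← pow_add, Nat.add_sub_cancel' hk]
  rw [hsplit, Gpoly]
  refine (CoeffMajorized.prod _ fun q hq => ?_).mul (CoeffMajorized.prod _ fun q hq => ?_)
  · exact coeffMajorized_one_add_X_add_C_mul_X
      (hqa q (mem_range.2 ((mem_range.1 hq).trans_le hk))) 0 1
  · exact coeffMajorized_one_sub_C_mul_X (hqa q (mem_range.2 (mem_Ico.1 hq).2)) 0 1

lemma coeffMajorized_Hpoly (a : ℕ) :
    CoeffMajorized (Hpoly a) (C (2 ^ a : ℝ) * (1 + X 0 + C (a : ℝ) * X 1) ^ a) := by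
  have hbinom : C (2 ^ a : ℝ) * (1 + X 0 + C (a : ℝ) * X 1 : MvPolynomial (Fin 2) ℝ) ^ a =
      ∑ k ∈ range (a + 1),
        C |(-1 : ℝ) ^ (a - k) * a.choose k| * (1 + X 0 + C (a : ℝ) * X 1) ^ a := by
    simp only [abs_mul, abs_pow, abs_neg, abs_one, one_pow, one_mul, Nat.abs_cast, ← sum_mul,
      ← map_sum, ← Nat.cast_sum, Nat.sum_range_choose, Nat.cast_pow, Nat.cast_ofNat]
  rw [hbinom, Hpoly]
  exact CoeffMajorized.sum _ fun k hk =>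
    (coeffMajorized_Gpoly (Nat.lt_succ_iff.mp (mem_range.mp hk))).C_mul _

lemma abs_coeff_Hpoly_le {a : ℕ} (ha : 1 ≤ a) (μ ν : ℕ) :
    |coeff (Finsupp.single 0 μ + Finsupp.single 1 ν) (Hpoly a)| ≤ 6 ^ a * (a : ℝ) ^ ν := by
  calc |coeff (Finsupp.single 0 μ + Finsupp.single 1 ν) (Hpoly a)|
      ≤ 2 ^ a * coeff (Finsupp.single 0 μ + Finsupp.single 1 ν)
          ((1 + X 0 + C (a : ℝ) * X 1 : MvPolynomial (Fin 2) ℝ) ^ a) := by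
        simpa only [coeff_C_mul] using coeffMajorized_Hpoly a _
    _ ≤ 2 ^ a * (3 ^ a * (a : ℝ) ^ ν) := by
        gcongr
        exact coeff_one_add_X_add_C_mul_X_pow_le (by exact_mod_cast ha) a μ ν
    _ = 6 ^ a * (a : ℝ) ^ ν := by rw [← mul_assoc, ← mul_pow]; norm_num

section FiniteDifferences

variable {G : Type*} [AddCommGroup G]

lemma fwdDiff_iter_congr {f g : ℕ → G} {n k : ℕ} (h : ∀ i ≤ n, f (k + i) = g (k + i)) :
    Δ_[1] ^[n] f k = Δ_[1] ^[n] g k := by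
  simp only [fwdDiff_iter_eq_sum_shift, smul_eq_mul, mul_one]
  exact sum_congr rfl fun i hi => by rw [h i (Nat.lt_succ_iff.mp (mem_range.mp hi))]

lemma fwdDiff_iter_succ_id_smul (f : ℕ → G) (n k : ℕ) :
    Δ_[1] ^[n + 1] (fun i => i • f i) k =
      k • Δ_[1] ^[n + 1] f k + (n + 1) • Δ_[1] ^[n] f (k + 1) := by
  have hstep : ∀ f : ℕ → G,
      Δ_[1] (fun i => i • f i) = (fun i => i • Δ_[1] f i) + fun i => f (i + 1) := by
    intro f
    funext i
    simp only [fwdDiff, Pi.add_apply, succ_nsmul, smul_sub]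
    abel
  induction n generalizing f k with
  | zero => simp [hstep]
  | succ n ih =>
    rw [Function.iterate_succ_apply, hstep, fwdDiff_iter_add, Pi.add_apply, ih,
      fwdDiff_iter_comp_add, ← Function.iterate_succ_apply, ← Function.iterate_succ_apply,
      succ_nsmul _ (n + 1)]
    abel

lemma map_fwdDiff_iter {M G' F : Type*} [AddCommMonoid M] [AddCommGroup G'] [FunLike F G G']
    [AddMonoidHomClass F G G'] (φ : F) (h : M) (f : M → G) (n : ℕ) (y : M) :
    φ (Δ_[h] ^[n] f y) = Δ_[h] ^[n] (φ ∘ f) y := by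
  simp only [fwdDiff_iter_eq_sum_shift, map_sum, map_zsmul, Function.comp_apply]

end FiniteDifferences

section ShiftedG

variable {A : Type*} [CommRing A]

def shiftedG (x y : A) (a b k : ℕ) : A :=
  (∏ q ∈ range k, (1 + x + q * y)) * ∏ q ∈ Ico (k + b) a, (1 - q * y)

variable (x y : A) {a b k : ℕ}

lemma map_shiftedG {B : Type*} [CommRing B] (φ : A →+* B) (a b k : ℕ) :
    φ (shiftedG x y a b k) = shiftedG (φ x) (φ y) a b k := by
  simp [shiftedG, map_prod]

lemma shiftedG_succ_sub (h : k + b < a) :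
    shiftedG x y a b (k + 1) - shiftedG x y a b k =
      (x + (b + 2 * k) * y) * shiftedG x y a (b + 1) k := by
  rw [shiftedG, shiftedG, shiftedG, prod_range_succ, Nat.add_right_comm,
    prod_eq_prod_Ico_succ_bot h, ← add_assoc]
  push_cast
  ring

lemma fwdDiff_iter_succ_shiftedG {n : ℕ} (h : k + b + n < a) :
    Δ_[1] ^[n + 1] (shiftedG x y a b) k = (x + b * y) * Δ_[1] ^[n] (shiftedG x y a (b + 1)) k
      + 2 * y * Δ_[1] ^[n] (fun i => i • shiftedG x y a (b + 1) i) k := by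
  rw [Function.iterate_succ_apply, fwdDiff_iter_congr (g := (x + b * y) • shiftedG x y a (b + 1)
    + (2 * y) • fun i => i • shiftedG x y a (b + 1) i)]
  · simp only [fwdDiff_iter_add, fwdDiff_iter_const_smul, Pi.add_apply, Pi.smul_apply, smul_eq_mul]
  · intro i hi
    rw [fwdDiff, shiftedG_succ_sub x y (by omega)]
    simp only [Pi.add_apply, Pi.smul_apply, smul_eq_mul, nsmul_eq_mul]
    push_cast
    ring

end ShiftedG

namespace MvPowerSeries

variable {σ R : Type*} [CommRing R] (w : σ → ℕ) {f g : MvPowerSeries σ R}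

lemma le_weightedOrder_add_of_le {n : ℕ∞} (hf : n ≤ f.weightedOrder w)
    (hg : n ≤ g.weightedOrder w) :
    n ≤ (f + g).weightedOrder w :=
  (le_min hf hg).trans (min_weightedOrder_le_add w)

lemma le_weightedOrder_mul_of_le {m n : ℕ∞} (hf : m ≤ f.weightedOrder w)
    (hg : n ≤ g.weightedOrder w) :
    m + n ≤ (f * g).weightedOrder w :=
  (add_le_add hf hg).trans (le_weightedOrder_mul w)

lemma weightedOrder_le_nsmul (k : ℕ) : f.weightedOrder w ≤ (k • f).weightedOrder w := by
  rw [← Nat.cast_smul_eq_nsmul R]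
  exact le_weightedOrder_smul w

lemma weightedOrder_X [Nontrivial R] (i : σ) :
    (X i : MvPowerSeries σ R).weightedOrder w = w i := by
  rw [X_def, weightedOrder_monomial_of_ne_zero w one_ne_zero, Finsupp.weight_single, one_smul]

variable {w} {x y : MvPowerSeries σ R}

theorem le_weightedOrder_fwdDiff_iter_shiftedG (hx : 1 ≤ x.weightedOrder w)
    (hy : 2 ≤ y.weightedOrder w) {a : ℕ} (n b k : ℕ) (h : k + b + n ≤ a) :
    (n : ℕ∞) ≤ (Δ_[1] ^[n] (shiftedG x y a b) k).weightedOrder w := by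
  induction n using Nat.strong_induction_on generalizing b k with
  | _ n ih =>
    rcases n with _ | n
    · simp
    rw [fwdDiff_iter_succ_shiftedG x y (by omega)]
    have hlin : 1 ≤ (x + b * y).weightedOrder w :=
      le_weightedOrder_add_of_le w hx <|
        (le_weightedOrder_mul_of_le w zero_le hy).trans' (by norm_num)
    have hdiff : (n : ℕ∞) ≤ (Δ_[1] ^[n] (shiftedG x y a (b + 1)) k).weightedOrder w :=
      ih n n.lt_succ_self (b + 1) k (by omega)
    have hleibniz : (n + 1 : ℕ∞) ≤
        (2 * y * Δ_[1] ^[n] (fun i => i • shiftedG x y a (b + 1) i) k).weightedOrder w := by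
      have h2y : 2 ≤ (2 * y).weightedOrder w := by
        simpa using le_weightedOrder_mul_of_le w zero_le hy
      rcases n with _ | m
      · exact (le_weightedOrder_mul_of_le w h2y zero_le).trans' (by norm_num)
      · rw [fwdDiff_iter_succ_id_smul]
        have hk : ((m + 1 : ℕ) : ℕ∞) ≤
            (k • Δ_[1] ^[m + 1] (shiftedG x y a (b + 1)) k).weightedOrder w :=
          hdiff.trans (weightedOrder_le_nsmul w k)
        have hk1 : (m : ℕ∞) ≤
            ((m + 1) • Δ_[1] ^[m] (shiftedG x y a (b + 1)) (k + 1)).weightedOrder w :=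
          (ih m (by omega) (b + 1) (k + 1) (by omega)).trans (weightedOrder_le_nsmul w _)
        calc ((m + 1 : ℕ) + 1 : ℕ∞) = 2 + m := by norm_cast; omega
          _ ≤ _ := le_weightedOrder_mul_of_le w h2y
            (le_weightedOrder_add_of_le w (hk.trans' (by exact_mod_cast m.le_succ)) hk1)
    calc ((n + 1 : ℕ) : ℕ∞) = 1 + n := by norm_cast; omega
      _ ≤ _ := le_weightedOrder_add_of_le w (le_weightedOrder_mul_of_le w hlin hdiff)
        (hleibniz.trans' (by norm_cast; omega))

end MvPowerSeries

lemma Hpoly_eq_fwdDiff_iter (a : ℕ) :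
    Hpoly a = Δ_[1] ^[a] (shiftedG (X 0 : MvPolynomial (Fin 2) ℝ) (X 1) a 0) 0 := by
  rw [fwdDiff_iter_eq_sum_shift, Hpoly]
  refine sum_congr rfl fun k _ => ?_
  simp [Gpoly, shiftedG, zsmul_eq_mul]

lemma coeff_Hpoly_eq_zero {a μ ν : ℕ} (h : μ + 2 * ν < a) :
    coeff (Finsupp.single 0 μ + Finsupp.single 1 ν) (Hpoly a) = 0 := by
  let w : Fin 2 → ℕ := ![1, 2]
  have hord := MvPowerSeries.le_weightedOrder_fwdDiff_iter_shiftedG (w := w) (a := a)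
    (MvPowerSeries.weightedOrder_X (R := ℝ) w 0).ge
    (MvPowerSeries.weightedOrder_X (R := ℝ) w 1).ge a 0 0 (by omega)
  rw [← coeff_coe, Hpoly_eq_fwdDiff_iter, ← coeToMvPowerSeries.ringHom_apply, map_fwdDiff_iter]
  have hcomp : coeToMvPowerSeries.ringHom ∘ shiftedG (X 0 : MvPolynomial (Fin 2) ℝ) (X 1) a 0 =
      shiftedG (MvPowerSeries.X 0) (MvPowerSeries.X 1) a 0 :=
    funext fun k => by simp [map_shiftedG]
  rw [hcomp]
  refine MvPowerSeries.coeff_eq_zero_of_lt_weightedOrder w (hord.trans_lt' ?_)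
  rw [map_add, Finsupp.weight_single, Finsupp.weight_single]
  simp only [w, Matrix.cons_val_zero, Matrix.cons_val_one, smul_eq_mul]
  exact_mod_cast (by omega : μ * 1 + ν * 2 < a)

theorem stmt3 (a : ℕ) (ha : 1 ≤ a) (μ ν : ℕ) :
    (μ + 2 * ν < a →
      MvPolynomial.coeff (Finsupp.single 0 μ + Finsupp.single 1 ν) (Hpoly a) = 0) ∧
    |MvPolynomial.coeff (Finsupp.single 0 μ + Finsupp.single 1 ν) (Hpoly a)| ≤
      6 ^ a * (a : ℝ) ^ ν :=
  ⟨coeff_Hpoly_eq_zero, abs_coeff_Hpoly_le ha μ ν⟩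
end

section
/- For every positive integer n and every real number θ with |θ| ≤ 2, one has ∏_{k=0}^{n} |2n·e^{iθ} − k| ≥ exp(n·θ²/36) · ∏_{k=0}^{n} (2n − k), where the absolute values are complex moduli. -/
/-!
Since `‖2n·e^{iθ} - k‖² = (2n - k)² + 4nk(1 - cos θ)`, each factor is at least
`(2n - k)·exp(kθ²/(18n))`: apply `1 - cos θ ≥ 25θ²/72` (valid for `|θ| ≤ 2`) and
`exp(2x/5) ≤ 1 + x` (valid for `0 ≤ x ≤ 2`) to `x = k(1 - cos θ)/n`.
Over `k = 0, …, n` these exponents add up to `(n + 1)θ²/36`.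
-/

open Finset

lemma Real.exp_two_fifths_mul_le_one_add {x : ℝ} (hx₀ : 0 ≤ x) (hx₂ : x ≤ 2) :
    exp (2 / 5 * x) ≤ 1 + x := by
  have hpos : 0 < 1 - x / 5 := by linarith
  have hfifth : exp (x / 5) ≤ 1 / (1 - x / 5) :=
    exp_bound_div_one_sub_of_interval (by positivity) (by linarith)
  calc exp (2 / 5 * x) = exp (x / 5) ^ 2 := by rw [← exp_nat_mul]; ring_nf
    _ ≤ (1 / (1 - x / 5)) ^ 2 := by gcongr
    _ ≤ 1 + x := by
      rw [div_pow, one_pow, div_le_iff₀ (by positivity)]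
      nlinarith [mul_nonneg hx₀ (mul_nonneg hx₀ (sub_nonneg.2 hx₂))]

lemma Real.mul_sq_le_one_sub_cos {θ : ℝ} (hθ : |θ| ≤ 2) : 25 / 72 * θ ^ 2 ≤ 1 - cos θ := by
  obtain ⟨y, hy⟩ : ∃ y, |θ| = 2 * y := ⟨|θ| / 2, by ring⟩
  have hy₀ : 0 ≤ y := by linarith [abs_nonneg θ]
  have hsin : 5 / 6 * y ≤ sin y := by
    rcases hy₀.eq_or_lt with rfl | hy₀
    · simp
    · have hy₁ : y ^ 2 ≤ 1 := pow_le_one₀ hy₀.le (by linarith)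
      nlinarith [sin_gt_sub_cube hy₀]
  have hcos : cos θ = 1 - 2 * sin y ^ 2 := by rw [← cos_two_mul_eq_one_sub, ← hy, cos_abs]
  have hθy : θ ^ 2 = 4 * y ^ 2 := by rw [← sq_abs θ, hy]; ring
  nlinarith [mul_self_le_mul_self (by positivity) hsin]

lemma Complex.norm_ofReal_mul_exp_sub_ofReal_sq (r t θ : ℝ) :
    ‖(r : ℂ) * exp (θ * I) - t‖ ^ 2 = (r - t) ^ 2 + 2 * r * t * (1 - Real.cos θ) := by
  rw [Complex.sq_norm, normSq_apply]
  simp only [sub_re, sub_im, mul_re, mul_im, ofReal_re, ofReal_im, exp_ofReal_mul_I_re,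
    exp_ofReal_mul_I_im]
  linear_combination r ^ 2 * Real.sin_sq_add_cos_sq θ

lemma Complex.sub_mul_exp_le_norm_two_mul_exp_sub {a t θ : ℝ} (ha : 0 < a) (ht₀ : 0 ≤ t)
    (hta : t ≤ a) (hθ : |θ| ≤ 2) :
    (2 * a - t) * Real.exp (t * θ ^ 2 / (18 * a)) ≤ ‖2 * (a : ℂ) * exp (θ * I) - t‖ := by
  set x := t * (1 - Real.cos θ) / a
  have hcos := Real.mul_sq_le_one_sub_cos hθ
  have hnum : 0 ≤ t * (1 - Real.cos θ) := mul_nonneg ht₀ (sub_nonneg.2 (Real.cos_le_one θ))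
  have hx₀ : 0 ≤ x := div_nonneg hnum ha.le
  have hx₂ : x ≤ 2 := by
    rw [div_le_iff₀ ha]; nlinarith [Real.neg_one_le_cos θ]
  have hexp : Real.exp (t * θ ^ 2 / (18 * a)) ^ 2 ≤ 1 + x := by
    refine le_trans ?_ (Real.exp_two_fifths_mul_le_one_add hx₀ hx₂)
    rw [← Real.exp_nat_mul, Real.exp_le_exp,
      show ((2 : ℕ) : ℝ) * (t * θ ^ 2 / (18 * a)) = t * θ ^ 2 / 9 / a by push_cast; ring,
      show 2 / 5 * x = 2 / 5 * (t * (1 - Real.cos θ)) / a by ring]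
    gcongr
    nlinarith [mul_le_mul_of_nonneg_left hcos ht₀]
  have hx : (2 * a - t) ^ 2 * x ≤ 4 * a * (t * (1 - Real.cos θ)) := by
    have hsq : (2 * a - t) ^ 2 ≤ (2 * a) ^ 2 := by nlinarith
    rw [mul_div_assoc', div_le_iff₀ ha]
    nlinarith [mul_le_mul_of_nonneg_right hsq hnum]
  have hsq : ((2 * a - t) * Real.exp (t * θ ^ 2 / (18 * a))) ^ 2 ≤
      ‖2 * (a : ℂ) * exp (θ * I) - t‖ ^ 2 :=
    calc _ ≤ (2 * a - t) ^ 2 * (1 + x) := by rw [mul_pow]; gcongr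
      _ ≤ (2 * a - t) ^ 2 + 2 * (2 * a) * t * (1 - Real.cos θ) := by linarith
      _ = _ := by rw [← norm_ofReal_mul_exp_sub_ofReal_sq]; push_cast; rfl
  exact le_of_pow_le_pow_left₀ two_ne_zero (norm_nonneg _) hsq

lemma Finset.sum_range_succ_natCast (n : ℕ) :
    ∑ k ∈ range (n + 1), (k : ℝ) = n * (n + 1) / 2 := by
  have h := sum_range_id_mul_two (n + 1)
  rw [Nat.add_sub_cancel] at h
  rw [eq_div_iff two_ne_zero, mul_comm (n : ℝ), ← Nat.cast_sum]
  exact_mod_cast h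

theorem stmt4 (n : ℕ) (hn : 1 ≤ n) (θ : ℝ) (hθ : |θ| ≤ 2) :
    Real.exp ((n : ℝ) * θ ^ 2 / 36) * ∏ k ∈ Finset.range (n + 1), (2 * (n : ℝ) - k) ≤
      ∏ k ∈ Finset.range (n + 1),
        ‖2 * (n : ℂ) * Complex.exp (θ * Complex.I) - k‖ := by
  have hn₀ : (0 : ℝ) < n := by exact_mod_cast hn
  have hk : ∀ k ∈ range (n + 1), (k : ℝ) ≤ n := fun k hk ↦ by
    exact_mod_cast Nat.lt_succ_iff.1 (mem_range.1 hk)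
  have hexponent :
      ∑ k ∈ range (n + 1), (k : ℝ) * θ ^ 2 / (18 * n) = (n + 1) * θ ^ 2 / 36 := by
    rw [← sum_div, ← sum_mul, sum_range_succ_natCast]
    field_simp
    ring
  calc Real.exp (n * θ ^ 2 / 36) * ∏ k ∈ range (n + 1), (2 * (n : ℝ) - k)
      ≤ Real.exp ((n + 1) * θ ^ 2 / 36) * ∏ k ∈ range (n + 1), (2 * (n : ℝ) - k) := by
        gcongr
        · exact prod_nonneg fun k hk' ↦ by linarith [hk k hk']
        · linarith
    _ = ∏ k ∈ range (n + 1), (2 * (n : ℝ) - k) * Real.exp (k * θ ^ 2 / (18 * n)) := by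
        rw [prod_mul_distrib, ← Real.exp_sum, hexponent, mul_comm]
    _ ≤ _ := prod_le_prod (fun k hk' ↦ mul_nonneg (by linarith [hk k hk']) (Real.exp_pos _).le)
        fun k hk' ↦ by
          simpa using Complex.sub_mul_exp_le_norm_two_mul_exp_sub hn₀ k.cast_nonneg (hk k hk') hθ
end

section
/- Let n ≥ 4 be an integer, let s be a real number with 2 ≤ s ≤ n/2, and let μ be a natural number with μ ≤ s. Set d = arccos(−s/(2n)). Then ∫_{−d}^{d} [ n! · 4^n / ∏_{k=0}^{n} |2n·e^{iθ} − k| ] · |(2n·e^{iθ} − 2n)/n|^{μ} · 2n dθ < 100 · (100·s/n)^{μ/2}. -/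
/-!
On the circle `z = 2n e^{iθ}` one has `|z - k|² = (2n - k)² + 4nk (1 - cos θ)`, and for the
`≥ n/2` indices with `2k ≥ n` this is at least `(2n - k)² e^{4(1 - cos θ)/9}`. Hence the product
`∏ |z - k|` exceeds its value `∏ (2n - k) = n · n! · C(2n, n)` at `θ = 0` by the factor
`e^{n(1 - cos θ)/9} ≥ e^{nθ²/45}`, and the central binomial bound `16ⁿ ≤ 4n C(2n, n)²` turns the
integrand into at most `4√n (2|θ|)^μ e^{-nθ²/45}`. Half of the Gaussian absorbs `|θ|^μ` through
`y^m e^{-y} ≤ (m/e)^m`, and the other half integrates to `√(90π/n)`; the hypothesis `μ ≤ s`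
converts `(180μ/(e n))^{μ/2}` into `(100s/n)^{μ/2}`, and `4√(90π) < 100`.
-/

open Finset Real MeasureTheory
open scoped Nat

namespace Nat

theorem sixteen_pow_le_four_mul_mul_centralBinom_sq {n : ℕ} (hn : 0 < n) :
    16 ^ n ≤ 4 * n * centralBinom n ^ 2 := by
  induction n with
  | zero => omega
  | succ m ih =>
    rcases Nat.eq_zero_or_pos m with rfl | hm
    · decide
    refine Nat.le_of_mul_le_mul_left ?_ (by positivity : 0 < (m + 1) ^ 2)
    have hsucc : (m + 1) ^ 2 * (4 * (m + 1) * centralBinom (m + 1) ^ 2)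
        = 4 * (m + 1) * (2 * (2 * m + 1) * centralBinom m) ^ 2 := by
      rw [← succ_mul_centralBinom_succ]; ring
    rw [hsucc]
    calc (m + 1) ^ 2 * 16 ^ (m + 1) = 16 * (m + 1) ^ 2 * 16 ^ m := by ring
      _ ≤ 16 * (m + 1) ^ 2 * (4 * m * centralBinom m ^ 2) := Nat.mul_le_mul_left _ (ih hm)
      _ ≤ 4 * (m + 1) * (2 * (2 * m + 1) * centralBinom m) ^ 2 := by
        nlinarith [sq_nonneg (centralBinom m)]

theorem descFactorial_two_mul_succ (n : ℕ) :
    (2 * n).descFactorial (n + 1) = n * n ! * centralBinom n := by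
  rcases Nat.eq_zero_or_pos n with rfl | hn
  · simp
  obtain ⟨m, rfl⟩ : ∃ m, n = m + 1 := ⟨n - 1, by omega⟩
  refine Nat.eq_of_mul_eq_mul_left (factorial_pos m) ?_
  have h := factorial_mul_descFactorial (show m + 1 + 1 ≤ 2 * (m + 1) by omega)
  rw [show 2 * (m + 1) - (m + 1 + 1) = m by omega] at h
  have hc := choose_mul_factorial_mul_factorial (show m + 1 ≤ 2 * (m + 1) by omega)
  rw [show 2 * (m + 1) - (m + 1) = m + 1 by omega, ← centralBinom_eq_two_mul_choose] at hc
  rw [h, ← hc, factorial_succ m]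
  ring

end Nat

theorem prod_range_two_mul_sub_eq (n : ℕ) :
    ∏ k ∈ range (n + 1), ((2 * n : ℝ) - k) = n * n ! * n.centralBinom := by
  have hcast : ∏ k ∈ range (n + 1), ((2 * n : ℝ) - k) = ((2 * n).descFactorial (n + 1) : ℝ) := by
    rw [Nat.descFactorial_eq_prod_range, Nat.cast_prod]
    refine prod_congr rfl fun k hk => ?_
    rw [Nat.cast_sub (by rw [mem_range] at hk; omega)]
    push_cast; ring
  rw [hcast, Nat.descFactorial_two_mul_succ]
  push_cast; ring

theorem factorial_mul_four_pow_mul_sqrt_le (n : ℕ) :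
    (n ! : ℝ) * 4 ^ n * √n ≤ 2 * ∏ k ∈ range (n + 1), ((2 * n : ℝ) - k) := by
  rcases Nat.eq_zero_or_pos n with rfl | hn
  · simp
  rw [prod_range_two_mul_sub_eq]
  have hsq : (4 : ℝ) ^ n * √n ≤ 2 * (n * n.centralBinom) := by
    rw [← sqrt_sq (by positivity : (0 : ℝ) ≤ 2 * (n * n.centralBinom)),
      ← sqrt_sq (by positivity : (0 : ℝ) ≤ 4 ^ n), ← sqrt_mul (by positivity)]
    refine sqrt_le_sqrt ?_
    have h16 : ((16 ^ n : ℕ) : ℝ) ≤ ((4 * n * n.centralBinom ^ 2 : ℕ) : ℝ) :=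
      Nat.cast_le.mpr (Nat.sixteen_pow_le_four_mul_mul_centralBinom_sq hn)
    push_cast at h16
    have hpow : ((4 : ℝ) ^ n) ^ 2 = 16 ^ n := by rw [← pow_mul, mul_comm, pow_mul]; norm_num
    rw [hpow]
    nlinarith [(Nat.cast_nonneg n : (0 : ℝ) ≤ n)]
  calc (n ! : ℝ) * 4 ^ n * √n = (4 ^ n * √n) * n ! := by ring
    _ ≤ (2 * (n * n.centralBinom)) * n ! := by gcongr
    _ = 2 * (n * n ! * n.centralBinom) := by ring

theorem Real.exp_le_one_add_two_mul {x : ℝ} (h0 : 0 ≤ x) (h1 : x ≤ 1) : exp x ≤ 1 + 2 * x := by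
  have h := exp_bound' h0 h1 (n := 2) (by norm_num)
  norm_num [Finset.sum_range_succ] at h
  nlinarith

theorem Real.rpow_mul_exp_neg_le {y m : ℝ} (hy : 0 ≤ y) (hm : 0 ≤ m) :
    y ^ m * exp (-y) ≤ (m / exp 1) ^ m := by
  rcases hm.eq_or_lt with rfl | hm
  · simpa using exp_le_one_iff.mpr (neg_nonpos.mpr hy)
  have hsplit : y ^ m * exp (-y) = (m * (y / m * exp (-(y / m)))) ^ m := by
    rw [mul_rpow hm.le (by positivity), mul_rpow (by positivity) (exp_pos _).le, ← exp_mul,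
      ← mul_assoc, ← mul_rpow hm.le (by positivity)]
    field_simp
  rw [hsplit]
  calc (m * (y / m * exp (-(y / m)))) ^ m ≤ (m * exp (-1)) ^ m := by
        gcongr; exact mul_exp_neg_le_exp_neg_one _
    _ = (m / exp 1) ^ m := by rw [exp_neg, div_eq_mul_inv]

theorem abs_pow_mul_exp_neg_mul_sq_le (μ : ℕ) {β : ℝ} (hβ : 0 < β) (x : ℝ) :
    |x| ^ μ * exp (-β * x ^ 2) ≤ (μ / (2 * exp 1 * β)) ^ ((μ : ℝ) / 2) := by
  have habs : |x| ^ μ = (β * x ^ 2) ^ ((μ : ℝ) / 2) * (β ^ ((μ : ℝ) / 2))⁻¹ := by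
    rw [mul_rpow hβ.le (sq_nonneg x), ← sq_abs, ← rpow_natCast, ← rpow_natCast |x|,
      ← rpow_mul (abs_nonneg x)]
    field_simp
    norm_num
  calc |x| ^ μ * exp (-β * x ^ 2)
      = (β * x ^ 2) ^ ((μ : ℝ) / 2) * exp (-(β * x ^ 2)) * (β ^ ((μ : ℝ) / 2))⁻¹ := by
        rw [habs, neg_mul]; ring
    _ ≤ ((μ : ℝ) / 2 / exp 1) ^ ((μ : ℝ) / 2) * (β ^ ((μ : ℝ) / 2))⁻¹ := by
        gcongr
        exact rpow_mul_exp_neg_le (by positivity) (by positivity)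
    _ = (μ / (2 * exp 1 * β)) ^ ((μ : ℝ) / 2) := by
        rw [← inv_rpow hβ.le, ← mul_rpow (by positivity) (by positivity)]
        congr 1
        field_simp

theorem sq_div_five_le_one_sub_cos {θ : ℝ} (hθ : |θ| ≤ π) : θ ^ 2 / 5 ≤ 1 - cos θ := by
  have hπ : π ^ 2 ≤ 10 := by nlinarith [pi_lt_d2, pi_pos]
  have h : 1 / 5 ≤ 2 / π ^ 2 := by rw [div_le_div_iff₀ (by norm_num) (by positivity)]; linarith
  nlinarith [cos_le_one_sub_mul_cos_sq hθ, sq_nonneg θ]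

theorem Complex.norm_ofReal_mul_exp_sub_sq (a b θ : ℝ) :
    ‖(a : ℂ) * Complex.exp (θ * Complex.I) - b‖ ^ 2 =
      (a - b) ^ 2 + 2 * a * b * (1 - Real.cos θ) := by
  have he : (a : ℂ) * Complex.exp (θ * Complex.I) - b
      = ((a * Real.cos θ - b : ℝ) : ℂ) + ((a * Real.sin θ : ℝ) : ℂ) * Complex.I := by
    rw [Complex.exp_mul_I, ← Complex.ofReal_cos, ← Complex.ofReal_sin]
    push_cast; ring
  rw [he, Complex.sq_norm, Complex.normSq_add_mul_I]
  linear_combination a ^ 2 * Real.sin_sq_add_cos_sq θ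

-- If `f` is not interval integrable, its integral is the junk value `0 ≤ ∫ g`.
theorem intervalIntegral_le_integral_of_le {f g : ℝ → ℝ} {a b : ℝ} {ν : Measure ℝ}
    (hab : a ≤ b) (hg : Integrable g ν) (hg0 : 0 ≤ g)
    (hfg : ∀ x ∈ Set.Icc a b, f x ≤ g x) : ∫ x in a..b, f x ∂ν ≤ ∫ x, g x ∂ν := by
  by_cases hf : IntervalIntegrable f ν a b
  · calc ∫ x in a..b, f x ∂ν ≤ ∫ x in a..b, g x ∂ν :=
          intervalIntegral.integral_mono_on hab hf hg.intervalIntegrable hfg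
      _ = ∫ x in Set.Ioc a b, g x ∂ν := intervalIntegral.integral_of_le hab
      _ ≤ ∫ x, g x ∂ν := setIntegral_le_integral hg (.of_forall hg0)
  · rw [intervalIntegral.integral_undef hf]
    exact integral_nonneg hg0

theorem sq_mul_exp_le_sq_add {n k t : ℝ} (hk : n ≤ 2 * k) (hkn : k ≤ n) (ht0 : 0 ≤ t)
    (ht2 : t ≤ 2) : (2 * n - k) ^ 2 * exp (4 * t / 9) ≤ (2 * n - k) ^ 2 + 4 * n * k * t := by
  have hexp := exp_le_one_add_two_mul (x := 4 * t / 9) (by linarith) (by linarith)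
  have hfac : (2 * n - k) ^ 2 * (8 / 9) ≤ 4 * n * k := by nlinarith
  nlinarith [mul_le_mul_of_nonneg_left hexp (sq_nonneg (2 * n - k))]

theorem sq_mul_ite_exp_le_norm_sq {n k : ℕ} (hk : k ≤ n) (θ : ℝ) :
    ((2 * n : ℝ) - k) ^ 2 * (if n ≤ 2 * k then exp (4 * (1 - cos θ) / 9) else 1) ≤
      ‖2 * (n : ℂ) * Complex.exp (θ * Complex.I) - k‖ ^ 2 := by
  have ht0 : 0 ≤ 1 - cos θ := by linarith [cos_le_one θ]
  have hkn : (k : ℝ) ≤ n := by exact_mod_cast hk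
  rw [show 2 * (n : ℂ) = ((2 * n : ℝ) : ℂ) by push_cast; rfl,
    show (k : ℂ) = ((k : ℝ) : ℂ) by push_cast; rfl, Complex.norm_ofReal_mul_exp_sub_sq]
  split_ifs with h
  · exact sq_mul_exp_le_sq_add (by exact_mod_cast h) hkn ht0 (by linarith [neg_one_le_cos θ])
      |>.trans_eq (by ring)
  · nlinarith [mul_nonneg (mul_nonneg (Nat.cast_nonneg n : (0 : ℝ) ≤ n)
      (Nat.cast_nonneg k : (0 : ℝ) ≤ k)) ht0]

theorem prod_sub_mul_exp_le_prod_norm (n : ℕ) (θ : ℝ) :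
    (∏ k ∈ range (n + 1), ((2 * n : ℝ) - k)) * exp (n * (1 - cos θ) / 9) ≤
      ∏ k ∈ range (n + 1), ‖2 * (n : ℂ) * Complex.exp (θ * Complex.I) - k‖ := by
  set t := 1 - cos θ
  have ht0 : 0 ≤ t := by linarith [cos_le_one θ]
  set S := (range (n + 1)).filter (fun k => n ≤ 2 * k)
  have hS : (n : ℝ) ≤ 2 * #S := by
    have hIco : S = Ico ((n + 1) / 2) (n + 1) := by
      ext k; simp only [S, mem_filter, mem_range, mem_Ico]; omega
    exact_mod_cast (show n ≤ 2 * #S by rw [hIco, Nat.card_Ico]; omega)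
  have hR : 0 ≤ ∏ k ∈ range (n + 1), ((2 * n : ℝ) - k) := prod_nonneg fun k hk => by
    have : (k : ℝ) ≤ n := by exact_mod_cast mem_range_succ_iff.mp hk
    linarith
  have hsq : ((∏ k ∈ range (n + 1), ((2 * n : ℝ) - k)) * exp (n * t / 9)) ^ 2 ≤
      (∏ k ∈ range (n + 1), ‖2 * (n : ℂ) * Complex.exp (θ * Complex.I) - k‖) ^ 2 := by
    calc ((∏ k ∈ range (n + 1), ((2 * n : ℝ) - k)) * exp (n * t / 9)) ^ 2
        = (∏ k ∈ range (n + 1), ((2 * n : ℝ) - k) ^ 2) * exp (4 * t / 9) ^ #S *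
            exp (n * t / 9 * 2 - #S * (4 * t / 9)) := by
          rw [← exp_nat_mul, mul_assoc, ← exp_add, prod_pow, mul_pow, ← exp_nat_mul]
          ring_nf
      _ ≤ (∏ k ∈ range (n + 1), ((2 * n : ℝ) - k) ^ 2) * exp (4 * t / 9) ^ #S := by
          refine mul_le_of_le_one_right (by positivity) (exp_le_one_iff.mpr ?_)
          nlinarith
      _ = ∏ k ∈ range (n + 1), ((2 * n : ℝ) - k) ^ 2 *
            (if n ≤ 2 * k then exp (4 * t / 9) else 1) := by
          rw [prod_mul_distrib, prod_ite, prod_const, prod_const, one_pow, mul_one]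
      _ ≤ ∏ k ∈ range (n + 1), ‖2 * (n : ℂ) * Complex.exp (θ * Complex.I) - k‖ ^ 2 :=
          prod_le_prod (fun k _ => mul_nonneg (sq_nonneg _) (by split_ifs <;> positivity))
            fun k hk => sq_mul_ite_exp_le_norm_sq (mem_range_succ_iff.mp hk) θ
      _ = _ := prod_pow _ _ _
  exact pow_le_pow_iff_left₀ (by positivity) (prod_nonneg fun _ _ => norm_nonneg _)
    two_ne_zero |>.mp hsq

theorem factorial_mul_four_pow_div_prod_norm_le {n : ℕ} (hn : 0 < n) {θ : ℝ} (hθ : |θ| ≤ π) :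
    (n ! : ℝ) * 4 ^ n / ∏ k ∈ range (n + 1), ‖2 * (n : ℂ) * Complex.exp (θ * Complex.I) - k‖ ≤
      2 / √n * exp (-(n / 45) * θ ^ 2) := by
  have hn' : (0 : ℝ) < n := by exact_mod_cast hn
  have hR : 0 < ∏ k ∈ range (n + 1), ((2 * n : ℝ) - k) := prod_pos fun k hk => by
    have : (k : ℝ) ≤ n := by exact_mod_cast mem_range_succ_iff.mp hk
    linarith
  have hexp : 1 ≤ exp (-(n / 45) * θ ^ 2) * exp (n * (1 - cos θ) / 9) := by
    rw [← exp_add]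
    exact one_le_exp (by nlinarith [sq_div_five_le_one_sub_cos hθ])
  calc (n ! : ℝ) * 4 ^ n / ∏ k ∈ range (n + 1), ‖2 * (n : ℂ) * Complex.exp (θ * Complex.I) - k‖
      ≤ (n ! : ℝ) * 4 ^ n /
          ((∏ k ∈ range (n + 1), ((2 * n : ℝ) - k)) * exp (n * (1 - cos θ) / 9)) :=
        div_le_div_of_nonneg_left (by positivity) (by positivity)
          (prod_sub_mul_exp_le_prod_norm n θ)
    _ ≤ 2 / √n * exp (-(n / 45) * θ ^ 2) := by
        rw [div_le_iff₀ (by positivity)]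
        calc (n ! : ℝ) * 4 ^ n = 2 / √n * ((n ! : ℝ) * 4 ^ n * √n / 2) := by
              field_simp
          _ ≤ 2 / √n * ∏ k ∈ range (n + 1), ((2 * n : ℝ) - k) := by
              gcongr; linarith [factorial_mul_four_pow_mul_sqrt_le n]
          _ ≤ 2 / √n * ((∏ k ∈ range (n + 1), ((2 * n : ℝ) - k)) *
                (exp (-(n / 45) * θ ^ 2) * exp (n * (1 - cos θ) / 9))) := by
              gcongr; exact le_mul_of_one_le_right hR.le hexp
          _ = _ := by ring

theorem norm_two_mul_exp_sub_div_le {n : ℕ} (hn : n ≠ 0) (θ : ℝ) :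
    ‖(2 * (n : ℂ) * Complex.exp (θ * Complex.I) - 2 * n) / n‖ ≤ 2 * |θ| := by
  have he : (2 * (n : ℂ) * Complex.exp (θ * Complex.I) - 2 * n) / n
      = 2 * (Complex.exp (Complex.I * θ) - 1) := by
    field_simp
  rw [he, norm_mul, Complex.norm_two, ← Real.norm_eq_abs]
  gcongr
  exact norm_exp_I_mul_ofReal_sub_one_le

noncomputable def arcIntegrand (n μ : ℕ) (θ : ℝ) : ℝ :=
  (n ! : ℝ) * 4 ^ n /
      (∏ k ∈ range (n + 1), ‖2 * (n : ℂ) * Complex.exp (θ * Complex.I) - k‖) *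
    (‖(2 * (n : ℂ) * Complex.exp (θ * Complex.I) - 2 * n) / n‖) ^ μ * (2 * (n : ℝ))

theorem arcIntegrand_le {n μ : ℕ} (hn : 0 < n) {s : ℝ} (hμ : (μ : ℝ) ≤ s) {θ : ℝ}
    (hθ : |θ| ≤ π) :
    arcIntegrand n μ θ ≤ 4 * √n * (100 * s / n) ^ ((μ : ℝ) / 2) * exp (-(n / 90) * θ ^ 2) := by
  have hn' : (0 : ℝ) < n := by exact_mod_cast hn
  have hsqrt : 2 / √n * (2 * n) = 4 * √n := by
    field_simp; rw [sq_sqrt hn'.le]; ring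
  have hexp : exp (-(n / 45) * θ ^ 2) = exp (-(n / 90) * θ ^ 2) * exp (-(n / 90) * θ ^ 2) := by
    rw [← exp_add]; ring_nf
  have hmoment : 2 ^ μ * (μ / (2 * exp 1 * (n / 90))) ^ ((μ : ℝ) / 2) ≤
      (100 * s / n) ^ ((μ : ℝ) / 2) := by
    have he : 2 ≤ exp 1 := by linarith [add_one_le_exp 1]
    have hs : 0 ≤ s := (Nat.cast_nonneg μ).trans hμ
    rw [← rpow_natCast, show (μ : ℝ) = 2 * (μ / 2) by ring, rpow_mul zero_le_two, ← mul_div_assoc,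
      mul_div_cancel_left₀ _ two_ne_zero, ← mul_rpow (by positivity) (by positivity)]
    gcongr
    rw [show (2 : ℝ) ^ (2 : ℝ) = 4 by norm_num, le_div_iff₀ hn']
    field_simp
    nlinarith
  calc arcIntegrand n μ θ ≤ 2 / √n * exp (-(n / 45) * θ ^ 2) * (2 * |θ|) ^ μ * (2 * n) := by
        unfold arcIntegrand
        gcongr
        · exact factorial_mul_four_pow_div_prod_norm_le hn hθ
        · exact norm_two_mul_exp_sub_div_le hn.ne' θ
    _ = 4 * √n * (2 ^ μ * (|θ| ^ μ * exp (-(n / 90) * θ ^ 2))) * exp (-(n / 90) * θ ^ 2) := by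
        rw [hexp, mul_pow, ← hsqrt]; ring
    _ ≤ 4 * √n * (2 ^ μ * (μ / (2 * exp 1 * (n / 90))) ^ ((μ : ℝ) / 2)) *
          exp (-(n / 90) * θ ^ 2) := by
        gcongr; exact abs_pow_mul_exp_neg_mul_sq_le μ (by positivity) θ
    _ ≤ 4 * √n * (100 * s / n) ^ ((μ : ℝ) / 2) * exp (-(n / 90) * θ ^ 2) := by
        gcongr

theorem stmt5_general (n : ℕ) (hn : 4 ≤ n) (s : ℝ) (hs : 2 ≤ s)
    (μ : ℕ) (hμ : (μ : ℝ) ≤ s) :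
    ∫ θ in (-(Real.arccos (-s / (2 * n))))..(Real.arccos (-s / (2 * n))),
      (Nat.factorial n : ℝ) * 4 ^ n /
          (∏ k ∈ Finset.range (n + 1),
            ‖2 * (n : ℂ) * Complex.exp (θ * Complex.I) - k‖) *
        (‖(2 * (n : ℂ) * Complex.exp (θ * Complex.I) - 2 * n) / n‖) ^ μ *
        (2 * (n : ℝ)) <
      100 * (100 * s / n) ^ ((μ : ℝ) / 2) := by
  have hn0 : 0 < n := by omega
  have hn' : (0 : ℝ) < n := by exact_mod_cast hn0
  set d := arccos (-s / (2 * n))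
  have hd : 0 ≤ d ∧ d ≤ π := ⟨arccos_nonneg _, arccos_le_pi _⟩
  set K := (100 * s / n) ^ ((μ : ℝ) / 2)
  have hK : 0 < K := rpow_pos_of_pos (by positivity) _
  have hconst : 4 * √n * √(π / (n / 90)) < 100 := by
    rw [mul_assoc, ← sqrt_mul hn'.le, show (n : ℝ) * (π / (n / 90)) = 90 * π by field_simp]
    have : √(90 * π) < 25 := (sqrt_lt' (by norm_num)).mpr (by nlinarith [pi_lt_d2])
    linarith
  show ∫ θ in -d..d, arcIntegrand n μ θ < 100 * K
  calc ∫ θ in -d..d, arcIntegrand n μ θ ≤ ∫ θ, 4 * √n * K * exp (-(n / 90) * θ ^ 2) :=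
        intervalIntegral_le_integral_of_le (by linarith)
          ((integrable_exp_neg_mul_sq (by positivity)).const_mul _) (fun θ => by positivity)
          fun θ hθ => arcIntegrand_le hn0 hμ (abs_le.mpr ⟨by linarith [hθ.1], by linarith [hθ.2]⟩)
    _ = 4 * √n * √(π / (n / 90)) * K := by
        rw [integral_const_mul, integral_gaussian]; ring
    _ < 100 * K := by gcongr

theorem stmt5 (n : ℕ) (hn : 4 ≤ n) (s : ℝ) (hs : 2 ≤ s) (hs' : s ≤ (n : ℝ) / 2)
    (μ : ℕ) (hμ : (μ : ℝ) ≤ s) :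
    ∫ θ in (-(Real.arccos (-s / (2 * n))))..(Real.arccos (-s / (2 * n))),
      (Nat.factorial n : ℝ) * 4 ^ n /
          (∏ k ∈ Finset.range (n + 1),
            ‖2 * (n : ℂ) * Complex.exp (θ * Complex.I) - k‖) *
        (‖(2 * (n : ℂ) * Complex.exp (θ * Complex.I) - 2 * n) / n‖) ^ μ *
        (2 * (n : ℝ)) <
      100 * (100 * s / n) ^ ((μ : ℝ) / 2) :=
  stmt5_general n hn s hs μ hμ
end

section
/- Let n ≥ 4 be an integer, let s be a real number with 2 ≤ s ≤ n/2, and let μ be a natural number with μ ≤ s. Then ∫_{−√(4n²−s²)}^{√(4n²−s²)} [ n! / ∏_{k=0}^{n} |(−s + i·y) − k| ] · |((−s + i·y) − 2n)/n|^{μ} dy < 100 · (100·s/n)^{s−1}. -/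
/-!
On the segment `z = -s + iy`, `y² ≤ 4n² - s²`, we have `|z| ≤ 2n`, hence `|(z - 2n)/n| ≤ 4`, and
`|z - k| ≥ (s + k) √(1 + (y/(s+n))²)` for every `k ≤ n`. As there are at least two factors, the
integrand is at most `n! 4^s / (∏ₖ (s + k) · (1 + (y/(s+n))²))`, whose integral is below
`π (s + n) n! 4^s / ∏ₖ (s + k)`. As `∏_{k ≤ n} (s + k) = Γ(s + n + 1) / Γ(s)`, log-convexity of `Γ`
gives `n! nˢ ≤ Γ(s) ∏ₖ (s + k)` and `Γ(s) ≤ s^(s-1)`, so the integral is below `8π (4s/n)^(s-1)`.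
-/

open Real Finset Nat Complex

namespace Real

lemma log_comp_Gamma_add_one {y : ℝ} (hy : 0 < y) :
    (log ∘ Gamma) (y + 1) = (log ∘ Gamma) y + log y := by
  simp only [Function.comp, Gamma_add_one hy.ne', log_mul hy.ne' (Gamma_pos_of_pos hy).ne']
  ring

theorem factorial_mul_rpow_le_Gamma_mul_prod {x : ℝ} (hx : 0 < x) (n : ℕ) :
    n ! * (n : ℝ) ^ x ≤ Gamma x * ∏ k ∈ range (n + 1), (x + k) := by
  rcases n.eq_zero_or_pos with rfl | hn
  · rw [Nat.cast_zero, zero_rpow hx.ne', mul_zero]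
    exact mul_nonneg (Gamma_pos_of_pos hx).le (prod_nonneg fun k _ => by positivity)
  have hge := BohrMollerup.f_add_nat_ge convexOn_log_Gamma log_comp_Gamma_add_one
    (n := n + 1) (by omega) hx
  have heq := BohrMollerup.f_add_nat_eq log_comp_Gamma_add_one hx (n + 1)
  have hpos : ∀ k ∈ range (n + 1), 0 < x + k := fun k _ => by positivity
  rw [← log_le_log_iff (by positivity) (mul_pos (Gamma_pos_of_pos hx) (prod_pos hpos)),
    log_mul (by positivity) (by positivity), log_mul (Gamma_pos_of_pos hx).ne' (prod_pos hpos).ne',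
    log_rpow (by positivity), log_prod (fun k hk => (hpos k hk).ne')]
  simp only [Function.comp, Nat.cast_add, Nat.cast_one, add_sub_cancel_right,
    Gamma_nat_eq_factorial] at hge heq
  rwa [add_comm _ x, heq] at hge

theorem Gamma_le_rpow_sub_one {s : ℝ} (hs : 1 ≤ s) : Gamma s ≤ s ^ (s - 1) := by
  rcases hs.eq_or_lt with rfl | hs
  · simp
  obtain ⟨N, hNs, hsN⟩ : ∃ N : ℕ, (N : ℝ) + 1 < s ∧ s ≤ N + 2 := by
    have h2 : 2 ≤ ⌈s⌉₊ := Nat.lt_ceil.2 (by exact_mod_cast hs)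
    refine ⟨⌈s⌉₊ - 2, ?_, ?_⟩ <;> rw [Nat.cast_sub h2, Nat.cast_ofNat]
    · linarith [Nat.ceil_lt_add_one (by linarith : 0 ≤ s)]
    · linarith [Nat.le_ceil s]
  have hle := BohrMollerup.f_add_nat_le convexOn_log_Gamma log_comp_Gamma_add_one
    (n := N + 1) (by omega) (x := s - (N + 1)) (by linarith) (by linarith)
  simp only [Function.comp, Nat.cast_add, Nat.cast_one, add_sub_cancel,
    Gamma_nat_eq_factorial] at hle
  have hfact : log (N ! : ℝ) ≤ N * log (N + 1) := by
    rw [← log_pow]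
    exact log_le_log (by positivity)
      (by exact_mod_cast (Nat.factorial_le_pow N).trans (Nat.pow_le_pow_left (by omega) N))
  rw [← log_le_log_iff (Gamma_pos_of_pos (by linarith)) (by positivity), log_rpow (by linarith)]
  calc log (Gamma s) ≤ (s - 1) * log (N + 1) := by linarith
    _ ≤ (s - 1) * log s := by gcongr

theorem factorial_div_prod_add_le {s : ℝ} (hs : 1 ≤ s) {n : ℕ} (hn : 1 ≤ n) :
    n ! / ∏ k ∈ range (n + 1), (s + k) ≤ s ^ (s - 1) / n ^ s := by
  have hs0 : 0 < s := by linarith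
  rw [div_le_div_iff₀ (prod_pos fun k _ => by positivity) (by positivity)]
  calc (n ! : ℝ) * n ^ s ≤ Gamma s * ∏ k ∈ range (n + 1), (s + k) :=
        factorial_mul_rpow_le_Gamma_mul_prod hs0 n
    _ ≤ s ^ (s - 1) * ∏ k ∈ range (n + 1), (s + k) := by
        gcongr
        exact Gamma_le_rpow_sub_one hs

end Real

lemma norm_neg_add_mul_I_sub_natCast (s y : ℝ) (k : ℕ) :
    ‖(-(s : ℂ) + y * I) - k‖ = √((s + k) ^ 2 + y ^ 2) := by
  have : (-(s : ℂ) + y * I) - k = ((-(s + k) : ℝ) : ℂ) + y * I := by push_cast; ring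
  rw [this, norm_add_mul_I, neg_sq]

lemma mul_sqrt_one_add_div_sq_le {a c : ℝ} (ha : 0 ≤ a) (hac : a ≤ c) (y : ℝ) :
    a * √(1 + (y / c) ^ 2) ≤ √(a ^ 2 + y ^ 2) := by
  rw [← sqrt_sq ha, ← sqrt_mul (sq_nonneg a), sqrt_sq ha, mul_add, mul_one,
    show a ^ 2 * (y / c) ^ 2 = (a / c) ^ 2 * y ^ 2 by ring]
  have hc : 0 ≤ c := ha.trans hac
  gcongr
  exact mul_le_of_le_one_left (sq_nonneg y)
    (pow_le_one₀ (div_nonneg ha hc) (div_le_one_of_le₀ hac hc))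

lemma prod_mul_one_add_div_sq_le_prod_norm {s : ℝ} (hs : 0 ≤ s) (y : ℝ) {n : ℕ} (hn : 1 ≤ n) :
    (∏ k ∈ range (n + 1), (s + k)) * (1 + (y / (s + n)) ^ 2) ≤
      ∏ k ∈ range (n + 1), ‖(-(s : ℂ) + y * I) - k‖ := by
  set u := 1 + (y / (s + n)) ^ 2
  have hu : 1 ≤ √u := one_le_sqrt.2 (le_add_of_nonneg_right (sq_nonneg _))
  calc (∏ k ∈ range (n + 1), (s + k)) * u
      ≤ (∏ k ∈ range (n + 1), (s + k)) * √u ^ (n + 1) := by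
        rw [← sq_sqrt (by positivity : 0 ≤ u), sqrt_sq (by positivity)]
        gcongr
        omega
    _ = ∏ k ∈ range (n + 1), (s + k) * √u := by rw [prod_mul_distrib, prod_const, card_range]
    _ ≤ ∏ k ∈ range (n + 1), ‖(-(s : ℂ) + y * I) - k‖ := by
        refine prod_le_prod (fun k _ => by positivity) fun k hk => ?_
        rw [norm_neg_add_mul_I_sub_natCast]
        refine mul_sqrt_one_add_div_sq_le (by positivity) ?_ y
        have := mem_range_succ_iff.1 hk
        gcongr

lemma norm_sub_two_mul_div_le_four {z : ℂ} {n : ℕ} (hz : ‖z‖ ≤ 2 * n) :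
    ‖(z - 2 * n) / n‖ ≤ 4 := by
  rcases n.eq_zero_or_pos with rfl | hn
  · simp
  rw [norm_div, Complex.norm_natCast, div_le_iff₀ (by positivity)]
  calc ‖z - 2 * n‖ ≤ ‖z‖ + ‖(2 * n : ℂ)‖ := norm_sub_le _ _
    _ ≤ 4 * n := by rw [show (2 * n : ℂ) = ((2 * n : ℕ) : ℂ) by push_cast; ring,
                      Complex.norm_natCast]; push_cast; linarith

lemma integral_inv_one_add_div_sq_lt {c : ℝ} (hc : 0 < c) (a b : ℝ) :
    ∫ y in a..b, (1 + (y / c) ^ 2)⁻¹ < c * π := by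
  rw [intervalIntegral.integral_comp_div (fun u => (1 + u ^ 2)⁻¹) hc.ne', integral_inv_one_add_sq,
    smul_eq_mul]
  have := arctan_lt_pi_div_two (b / c)
  have := neg_pi_div_two_lt_arctan (a / c)
  gcongr
  linarith

lemma rpow_div_rpow_mul_lt {n s : ℝ} (hn : 0 < n) (hs : 1 ≤ s) (hsn : s ≤ n) :
    s ^ (s - 1) / n ^ s * 4 ^ s * ((s + n) * π) < 100 * (100 * s / n) ^ (s - 1) := by
  have hs0 : 0 < s := by linarith
  have hsplit : s ^ (s - 1) / n ^ s * 4 ^ s = 4 / n * (4 * s / n) ^ (s - 1) := by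
    rw [div_rpow (by positivity) hn.le, mul_rpow (by norm_num) hs0.le, rpow_sub_one hn.ne',
      rpow_sub_one (by norm_num : (4 : ℝ) ≠ 0)]
    field_simp
  calc s ^ (s - 1) / n ^ s * 4 ^ s * ((s + n) * π)
      = 4 * ((s + n) / n) * π * (4 * s / n) ^ (s - 1) := by rw [hsplit]; ring
    _ ≤ 4 * 2 * π * (100 * s / n) ^ (s - 1) := by
        gcongr
        · rw [div_le_iff₀ hn]; linarith
        · linarith
    _ < 100 * (100 * s / n) ^ (s - 1) := by
        gcongr
        linarith [pi_lt_d2]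

noncomputable def segmentIntegrand (n : ℕ) (s : ℝ) (μ : ℕ) (y : ℝ) : ℝ :=
  (n ! : ℝ) / (∏ k ∈ range (n + 1), ‖(-(s : ℂ) + y * I) - k‖) *
    ‖((-(s : ℂ) + y * I) - 2 * n) / n‖ ^ μ

lemma continuous_segmentIntegrand {s : ℝ} (hs : 0 < s) (n μ : ℕ) :
    Continuous (segmentIntegrand n s μ) := by
  refine (continuous_const.div (by fun_prop) fun y => (prod_pos fun k _ => ?_).ne').mul
    (by fun_prop)
  rw [norm_neg_add_mul_I_sub_natCast]
  positivity

lemma segmentIntegrand_le {n : ℕ} (hn : 1 ≤ n) {s y : ℝ} (hs : 0 < s)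
    (hy : s ^ 2 + y ^ 2 ≤ 4 * n ^ 2) {μ : ℕ} (hμ : (μ : ℝ) ≤ s) :
    segmentIntegrand n s μ y ≤
      n ! / (∏ k ∈ range (n + 1), (s + k)) * 4 ^ s * (1 + (y / (s + n)) ^ 2)⁻¹ := by
  have hz : ‖-(s : ℂ) + y * I‖ ≤ 2 * n := by
    rw [show -(s : ℂ) = ((-s : ℝ) : ℂ) by push_cast; ring, norm_add_mul_I, neg_sq,
      sqrt_le_left (by positivity)]
    linarith
  have hpow : ‖((-(s : ℂ) + y * I) - 2 * n) / n‖ ^ μ ≤ (4 : ℝ) ^ s := by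
    calc _ ≤ (4 : ℝ) ^ μ := pow_le_pow_left₀ (norm_nonneg _) (norm_sub_two_mul_div_le_four hz) μ
      _ ≤ (4 : ℝ) ^ s := by
        rw [← rpow_natCast]
        exact rpow_le_rpow_of_exponent_le (by norm_num) hμ
  unfold segmentIntegrand
  calc _ ≤ (n ! : ℝ) / ((∏ k ∈ range (n + 1), (s + k)) * (1 + (y / (s + n)) ^ 2)) * 4 ^ s := by
        gcongr
        exact prod_mul_one_add_div_sq_le_prod_norm hs.le y hn
    _ = _ := by field_simp

theorem stmt6_general (n : ℕ) (s : ℝ) (hs : 2 ≤ s) (hs' : s ≤ (n : ℝ) / 2)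
    (μ : ℕ) (hμ : (μ : ℝ) ≤ s) :
    ∫ y in (-(Real.sqrt (4 * (n : ℝ) ^ 2 - s ^ 2)))..(Real.sqrt (4 * (n : ℝ) ^ 2 - s ^ 2)),
      (Nat.factorial n : ℝ) /
          (∏ k ∈ Finset.range (n + 1),
            ‖(-(s : ℂ) + y * Complex.I) - k‖) *
        ‖((-(s : ℂ) + y * Complex.I) - 2 * n) / n‖ ^ μ <
      100 * (100 * s / n) ^ (s - 1) := by
  have hn : 1 ≤ n := by exact_mod_cast (by linarith : (1 : ℝ) ≤ n)
  set R := √(4 * (n : ℝ) ^ 2 - s ^ 2)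
  set P := ∏ k ∈ range (n + 1), (s + (k : ℝ))
  have hc : 0 < s + n := by positivity
  have hR : R ^ 2 = 4 * n ^ 2 - s ^ 2 := sq_sqrt (by nlinarith)
  have hg : Continuous fun y : ℝ => n ! / P * 4 ^ s * (1 + (y / (s + n)) ^ 2)⁻¹ :=
    continuous_const.mul ((by fun_prop : Continuous fun y : ℝ => 1 + (y / (s + n)) ^ 2).inv₀
      fun y => by positivity)
  calc _ ≤ ∫ y in -R..R, n ! / P * 4 ^ s * (1 + (y / (s + n)) ^ 2)⁻¹ := by
        refine intervalIntegral.integral_mono_on (neg_le_self (sqrt_nonneg _))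
          ((continuous_segmentIntegrand (by linarith) n μ).intervalIntegrable _ _)
          (hg.intervalIntegrable _ _) fun y hy => segmentIntegrand_le hn (by linarith) ?_ hμ
        linarith [sq_le_sq' hy.1 hy.2]
    _ = n ! / P * 4 ^ s * ∫ y in -R..R, (1 + (y / (s + n)) ^ 2)⁻¹ :=
        intervalIntegral.integral_const_mul _ _
    _ < n ! / P * 4 ^ s * ((s + n) * π) := by gcongr; exact integral_inv_one_add_div_sq_lt hc _ _
    _ ≤ s ^ (s - 1) / n ^ s * 4 ^ s * ((s + n) * π) := by
        gcongr ?_ * _ * _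
        exact factorial_div_prod_add_le (by linarith) hn
    _ < 100 * (100 * s / n) ^ (s - 1) :=
        rpow_div_rpow_mul_lt (by positivity) (by linarith) (by linarith)

theorem stmt6 (n : ℕ) (hn : 4 ≤ n) (s : ℝ) (hs : 2 ≤ s) (hs' : s ≤ (n : ℝ) / 2)
    (μ : ℕ) (hμ : (μ : ℝ) ≤ s) :
    ∫ y in (-(Real.sqrt (4 * (n : ℝ) ^ 2 - s ^ 2)))..(Real.sqrt (4 * (n : ℝ) ^ 2 - s ^ 2)),
      (Nat.factorial n : ℝ) /
          (∏ k ∈ Finset.range (n + 1),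
            ‖(-(s : ℂ) + y * Complex.I) - k‖) *
        ‖((-(s : ℂ) + y * Complex.I) - 2 * n) / n‖ ^ μ <
      100 * (100 * s / n) ^ (s - 1) :=
  stmt6_general n s hs hs' μ hμ
end

section
/- Let k ≥ 1 be an integer, let p be a prime, and let ℓ be a natural number. Then the integer ∑_{j=0}^{k} (−1)^{j·p} · (kp choose jp) · (jp)^{ℓ} is divisible by p^k, where by convention 0^0 = 1. -/
/-!
Write `c_i` for the coefficients of `(1 - X)^(kp)`; the sum is `p^ℓ · ∑_j c_{jp} j^ℓ`, i.e. `p^ℓ`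
times the `ℓ`-th moment `∑_j a_j j^ℓ` of `contract p ((1 - X)^(kp)) = ∑_j c_{jp} X^j`.
Over `ℤ` we have `(1 - X)^p = (1 - X^p) + p h`, so
`(1 - X)^(kp) = ∑_m C(k, m) p^m h^m (1 - X^p)^(k-m)`, and contracting turns the factor
`(1 - X^p)^(k-m)` into `(1 - X)^(k-m)`. The `ℓ`-th moment vanishes on multiples of `(1 - X)^n`
when `ℓ < n`, so only the terms with `m ≥ k - ℓ` survive, and they are divisible by `p^(k-ℓ)`.
-/

open Polynomial Finset

namespace Polynomial

section CommSemiring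

variable {R : Type*} [CommSemiring R]

theorem contract_sum {ι : Type*} {p : ℕ} (hp : p ≠ 0) (s : Finset ι) (f : ι → R[X]) :
    contract p (∑ i ∈ s, f i) = ∑ i ∈ s, contract p (f i) := by
  ext n
  simp only [coeff_contract hp, finsetSum_coeff]

/-- The value at `1` of `(X * d/dX)^ℓ Q`. -/
noncomputable def moment (ℓ : ℕ) : R[X] →ₗ[R] R :=
  lsum fun j => ((j : R) ^ ℓ) • LinearMap.id

theorem moment_monomial (ℓ j : ℕ) (a : R) : moment ℓ (monomial j a) = a * j ^ ℓ := by
  simp [moment, mul_comm]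

theorem moment_C_mul (ℓ : ℕ) (a : R) (Q : R[X]) : moment ℓ (C a * Q) = a * moment ℓ Q := by
  rw [C_mul', map_smul, smul_eq_mul]

theorem moment_X_mul (ℓ : ℕ) (Q : R[X]) :
    moment ℓ (X * Q) = moment ℓ Q + ∑ i ∈ range ℓ, ℓ.choose i * moment i Q := by
  induction Q using Polynomial.induction_on' with
  | add f g hf hg => simp only [mul_add, map_add, hf, hg, sum_add_distrib]; ring
  | monomial j a =>
    rw [X_mul_monomial, moment_monomial, Nat.cast_succ, add_pow, sum_range_succ]
    simp only [moment_monomial, one_pow, mul_one, Nat.choose_self, Nat.cast_one, mul_add, mul_sum]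
    rw [add_comm]
    exact congrArg _ (sum_congr rfl fun i _ => by ring)

theorem moment_contract {p N : ℕ} (hp : p ≠ 0) {P : R[X]} (hN : P.natDegree ≤ N * p) (ℓ : ℕ) :
    moment ℓ (contract p P) = ∑ j ∈ range (N + 1), P.coeff (j * p) * j ^ ℓ := by
  have hdeg : (contract p P).natDegree < N + 1 := by
    refine Nat.lt_succ_of_le (natDegree_le_iff_coeff_eq_zero.2 fun n hn => ?_)
    rw [coeff_contract hp]
    exact coeff_eq_zero_of_natDegree_lt (hN.trans_lt (Nat.mul_lt_mul_of_pos_right hn hp.bot_lt))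
  rw [moment, lsum_apply, sum_over_range' _ (by simp) _ hdeg]
  simp [coeff_contract hp, mul_comm]

end CommSemiring

section CommRing

variable {R : Type*} [CommRing R]

theorem coeff_one_sub_X_pow (n i : ℕ) :
    ((1 - X : R[X]) ^ n).coeff i = (-1) ^ i * n.choose i := by
  have h : (1 - X : R[X]) = C (-1) * X + 1 := by simp; ring
  rw [h, add_pow, finsetSum_coeff]
  simp only [one_pow, mul_one, mul_pow, ← C_pow, ← C_eq_natCast, mul_right_comm _ _ (C _),
    ← C_mul, coeff_C_mul_X_pow]
  rw [sum_ite_eq]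
  split_ifs with hi
  · ring
  · rw [Nat.choose_eq_zero_of_lt (by simpa using hi)]; simp

theorem moment_one_sub_X_pow_mul {ℓ n : ℕ} (h : ℓ < n) (Q : R[X]) :
    moment ℓ ((1 - X) ^ n * Q) = 0 := by
  induction n generalizing ℓ with
  | zero => omega
  | succ n ih =>
    rw [pow_succ', mul_assoc, sub_mul, one_mul, map_sub, moment_X_mul, sub_add_cancel_left,
      neg_eq_zero]
    exact sum_eq_zero fun i hi => by rw [ih (by simp at hi; omega), mul_zero]

end CommRing

theorem C_dvd_pow_sub_expand (p : ℕ) [Fact p.Prime] (f : ℤ[X]) :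
    C (p : ℤ) ∣ f ^ p - expand ℤ p f := by
  rw [C_dvd_iff_dvd_coeff]
  intro i
  rw [← ZMod.intCast_zmod_eq_zero_iff_dvd, ← eq_intCast (Int.castRingHom _), ← coeff_map]
  simp [Polynomial.map_sub, Polynomial.map_pow, map_expand, ZMod.expand_card]

theorem pow_dvd_moment_contract_one_sub_X_pow {p : ℕ} (hp : p.Prime) (k ℓ : ℕ) :
    (p : ℤ) ^ (k - ℓ) ∣ moment ℓ (contract p ((1 - X : ℤ[X]) ^ (p * k))) := by
  have := Fact.mk hp
  obtain ⟨h, hh⟩ := C_dvd_pow_sub_expand p (1 - X)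
  have hexpand : (1 - X : ℤ[X]) ^ (p * k) = ∑ m ∈ range (k + 1),
      h ^ m * expand ℤ p (C ((p : ℤ) ^ m * k.choose m) * (1 - X) ^ (k - m)) := by
    rw [pow_mul, ← sub_add_cancel ((1 - X : ℤ[X]) ^ p) (expand ℤ p (1 - X)), hh, add_pow]
    refine sum_congr rfl fun m _ => ?_
    simp only [map_mul, map_pow, map_natCast]
    ring
  rw [hexpand, contract_sum hp.ne_zero, map_sum]
  refine dvd_sum fun m _ => ?_
  rw [contract_mul_expand hp.ne_zero, mul_comm, mul_assoc, moment_C_mul]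
  rcases lt_or_ge ℓ (k - m) with hlt | hge
  · rw [moment_one_sub_X_pow_mul hlt, mul_zero]
    exact dvd_zero _
  · exact ((pow_dvd_pow _ (by omega)).trans (dvd_mul_right _ _)).mul_right _

end Polynomial

theorem stmt11_general (k : ℕ) (p : ℕ) (hp : p.Prime) (ℓ : ℕ) :
    ((p : ℤ) ^ k) ∣ ∑ j ∈ Finset.range (k + 1),
      (-1 : ℤ) ^ (j * p) * (Nat.choose (k * p) (j * p) : ℤ) * ((j : ℤ) * p) ^ ℓ := by
  have hdeg : ((1 - X : ℤ[X]) ^ (p * k)).natDegree ≤ k * p :=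
    calc _ ≤ p * k * 1 := natDegree_pow_le_of_le _ (by compute_degree)
      _ = k * p := by ring
  have hsum : ∑ j ∈ range (k + 1),
      (-1 : ℤ) ^ (j * p) * (Nat.choose (k * p) (j * p) : ℤ) * ((j : ℤ) * p) ^ ℓ =
      p ^ ℓ * moment ℓ (contract p ((1 - X : ℤ[X]) ^ (p * k))) := by
    rw [moment_contract hp.ne_zero hdeg, mul_sum]
    refine sum_congr rfl fun j _ => ?_
    rw [coeff_one_sub_X_pow, mul_comm p k]
    ring
  rw [hsum]
  calc (p : ℤ) ^ k ∣ p ^ ℓ * p ^ (k - ℓ) := by rw [← pow_add]; exact pow_dvd_pow _ (by omega)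
    _ ∣ _ := mul_dvd_mul_left _ (pow_dvd_moment_contract_one_sub_X_pow hp k ℓ)

theorem stmt11 (k : ℕ) (hk : 1 ≤ k) (p : ℕ) (hp : p.Prime) (ℓ : ℕ) :
    ((p : ℤ) ^ k) ∣ ∑ j ∈ Finset.range (k + 1),
      (-1 : ℤ) ^ (j * p) * (Nat.choose (k * p) (j * p) : ℤ) * ((j : ℤ) * p) ^ ℓ :=
  stmt11_general k p hp ℓ
end

section
/- Let k ≥ 1 be an integer, let p be a prime, let ℓ be a natural number, and let i be an integer with 1 ≤ i ≤ p − 1. Then the integer ∑_{j=0}^{k−1} (−1)^{j·p} · (kp choose (jp + i)) · (jp + i)^{ℓ} is divisible by p^k. -/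
/-!
Write `ψ_ℓ(F) = ∑_{m ≡ i (mod p)} m^ℓ [X^m] F`; the sum in question is `± ψ_ℓ((1 - X)^{kp})`.
Since `(1 - X)^p = 1 - X^p + p u`, multiplying by `(1 - X)^p` replaces `F` by
`F - F X^p + p u F`. Shifting by `X^p` turns `m^ℓ` into `(m + p)^ℓ`, so `ψ_ℓ(F X^p) - ψ_ℓ(F)` is
`p` times a combination of the `ψ_t(F)`, `t < ℓ`. Thus each factor `(1 - X)^p` contributes a
factor `p`, uniformly in `ℓ` and in the cofactor, and induction gives `p^k ∣ ψ_ℓ((1 - X)^{kp})`.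
-/

open Polynomial Finset

noncomputable def residueMoment (R : Type*) [CommRing R] (p i ℓ : ℕ) : R[X] →ₗ[R] R :=
  lsum fun m => (if m % p = i then (m : R) ^ ℓ else 0) • LinearMap.id

section ResidueMoment

variable {R : Type*} [CommRing R]

theorem residueMoment_monomial (p i ℓ n : ℕ) (a : R) :
    residueMoment R p i ℓ (monomial n a) = if n % p = i then (n : R) ^ ℓ * a else 0 := by
  rw [residueMoment, lsum_apply, sum_monomial_index _ _ (by simp)]
  split_ifs <;> simp

theorem residueMoment_mul_X_pow (p i ℓ : ℕ) (F : R[X]) :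
    residueMoment R p i ℓ (F * X ^ p) =
      ∑ t ∈ range (ℓ + 1), (ℓ.choose t : R) * (p : R) ^ (ℓ - t) * residueMoment R p i t F := by
  induction F using Polynomial.induction_on' with
  | add F G hF hG =>
    simp only [add_mul, map_add, hF, hG, mul_add, sum_add_distrib]
  | monomial n a =>
    simp only [monomial_mul_X_pow, residueMoment_monomial, Nat.add_mod_right]
    split_ifs
    · rw [Nat.cast_add, add_pow, sum_mul]
      exact sum_congr rfl fun t _ => by ring
    · simp

theorem pow_succ_dvd_residueMoment_mul_X_pow_sub {p i q : ℕ} {F : R[X]}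
    (hF : ∀ t, (p : R) ^ q ∣ residueMoment R p i t F) (ℓ : ℕ) :
    (p : R) ^ (q + 1) ∣ residueMoment R p i ℓ (F * X ^ p) - residueMoment R p i ℓ F := by
  rw [residueMoment_mul_X_pow, sum_range_succ]
  simp only [Nat.choose_self, Nat.cast_one, Nat.sub_self, pow_zero, one_mul, add_sub_cancel_right]
  refine dvd_sum fun t ht => ?_
  rw [mul_assoc, pow_succ']
  exact (mul_dvd_mul (dvd_pow_self _ (Nat.sub_ne_zero_of_lt (mem_range.mp ht))) (hF t)).mul_left _

theorem pow_dvd_residueMoment_mul_pow {p i : ℕ} {G : R[X]} (hG : C (p : R) ∣ G - (1 - X ^ p))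
    (q ℓ : ℕ) (H : R[X]) : (p : R) ^ q ∣ residueMoment R p i ℓ (H * G ^ q) := by
  induction q generalizing ℓ H with
  | zero => simp
  | succ q ih =>
    obtain ⟨u, hu⟩ := hG
    have hsplit : H * G ^ (q + 1) =
        H * G ^ q - H * G ^ q * X ^ p + (p : R) • (u * H * G ^ q) := by
      rw [smul_eq_C_mul, pow_succ, eq_add_of_sub_eq hu]; ring
    rw [hsplit, map_add, map_sub, map_smul, smul_eq_mul, ← neg_sub]
    refine dvd_add (dvd_neg.mpr ?_) ?_
    · exact pow_succ_dvd_residueMoment_mul_X_pow_sub (fun t => ih t H) ℓ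
    · rw [pow_succ']
      exact mul_dvd_mul_left _ (ih ℓ _)

theorem one_sub_X_pow_eq_sum (n : ℕ) :
    (1 - X : R[X]) ^ n = ∑ m ∈ range (n + 1), monomial m ((-1) ^ m * (n.choose m : R)) := by
  rw [sub_eq_neg_add, add_pow]
  refine sum_congr rfl fun m _ => ?_
  rw [one_pow, mul_one, neg_pow, ← C_mul_X_pow_eq_monomial, C_mul, C_pow, C_neg, C_1, map_natCast]
  ring

theorem residueMoment_one_sub_X_pow (p i ℓ n : ℕ) :
    residueMoment R p i ℓ ((1 - X) ^ n) = ∑ m ∈ range (n + 1),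
      if m % p = i then (m : R) ^ ℓ * ((-1) ^ m * (n.choose m : R)) else 0 := by
  simp only [one_sub_X_pow_eq_sum, map_sum, residueMoment_monomial]

end ResidueMoment

theorem C_dvd_one_sub_X_pow_sub {p : ℕ} (hp : p.Prime) :
    C (p : ℤ) ∣ (1 - X) ^ p - (1 - X ^ p) := by
  have := Fact.mk hp
  rw [← Ideal.mem_span_singleton, ← Set.image_singleton, ← Ideal.map_span,
    ← ZMod.ker_intCastRingHom, ← ker_mapRingHom, RingHom.mem_ker]
  simp [sub_pow_char]

theorem sum_range_mul_ite_mod_eq {M : Type*} [AddCommMonoid M] {p i : ℕ} (hi : i < p)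
    (f : ℕ → M) (k : ℕ) :
    ∑ m ∈ range (k * p), (if m % p = i then f m else 0) = ∑ j ∈ range k, f (j * p + i) := by
  induction k with
  | zero => simp
  | succ k ih =>
    rw [add_mul, one_mul, sum_range_add, ih, sum_range_succ]
    congr 1
    rw [sum_congr rfl fun r hr => by
      rw [Nat.mul_add_mod_self_right, Nat.mod_eq_of_lt (mem_range.mp hr)],
      sum_ite_eq', if_pos (mem_range.mpr hi), add_comm]

theorem stmt12_general (k : ℕ) (p : ℕ) (hp : p.Prime) (ℓ : ℕ)
    (i : ℕ) (hi : 1 ≤ i) (hi' : i ≤ p - 1) :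
    ((p : ℤ) ^ k) ∣ ∑ j ∈ Finset.range k,
      (-1 : ℤ) ^ (j * p) * (Nat.choose (k * p) (j * p + i) : ℤ) *
        ((j : ℤ) * p + i) ^ ℓ := by
  have hip : i < p := by have := hp.two_le; omega
  have h := pow_dvd_residueMoment_mul_pow (i := i) (C_dvd_one_sub_X_pow_sub hp) k ℓ 1
  rw [one_mul, ← pow_mul, mul_comm, residueMoment_one_sub_X_pow, sum_range_succ,
    if_neg (by rw [Nat.mul_mod_left]; omega), add_zero, sum_range_mul_ite_mod_eq hip] at h
  have hsign : ∑ j ∈ range k, ((j * p + i : ℕ) : ℤ) ^ ℓ *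
      ((-1) ^ (j * p + i) * ((k * p).choose (j * p + i) : ℤ)) =
      (-1) ^ i * ∑ j ∈ range k, (-1 : ℤ) ^ (j * p) * ((k * p).choose (j * p + i) : ℤ) *
        ((j : ℤ) * p + i) ^ ℓ := by
    rw [mul_sum]
    refine sum_congr rfl fun j _ => ?_
    push_cast
    ring
  rwa [hsign, ((isUnit_neg_one).pow i).dvd_mul_left] at h

theorem stmt12 (k : ℕ) (hk : 1 ≤ k) (p : ℕ) (hp : p.Prime) (ℓ : ℕ)
    (i : ℕ) (hi : 1 ≤ i) (hi' : i ≤ p - 1) :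
    ((p : ℤ) ^ k) ∣ ∑ j ∈ Finset.range k,
      (-1 : ℤ) ^ (j * p) * (Nat.choose (k * p) (j * p + i) : ℤ) *
        ((j : ℤ) * p + i) ^ ℓ :=
  stmt12_general k p hp ℓ i hi hi'
end

section
/- Let k ≥ 1 be an integer and let f : ℕ → ℝ be k-concordant with threshold B. Then for every integer a ≥ B and every prime p, the value Δ^{kp} f(a) is an integer divisible by p^k; that is, there is an integer m with Δ^{kp} f(a) = p^k · m. -/
open Polynomial

/-- `f : ℕ → ℝ` is `k`-concordant with threshold `B` if for every tuple
`m₀, …, m_k` of integers `≥ B` there is a `P ∈ ℤ[X]` with `P(mᵢ) = f(mᵢ)` for all `i`. -/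
def IsConcordant (k : ℕ) (f : ℕ → ℝ) (B : ℕ) : Prop :=
  ∀ m : Fin (k + 1) → ℕ, (∀ i, B ≤ m i) →
    ∃ P : Polynomial ℤ, ∀ i, ((P.eval ((m i : ℤ)) : ℤ) : ℝ) = f (m i)

section Shift

variable {R : Type*} [CommRing R]

/-- The shift endomorphism on functions `ℕ → R`. -/
def shE (R : Type*) [CommRing R] : Module.End ℤ (ℕ → R) where
  toFun f := fun a => f (a + 1)
  map_add' _ _ := rfl
  map_smul' _ _ := rfl

lemma shE_pow_apply (q : ℕ) (f : ℕ → R) (a : ℕ) : ((shE R) ^ q) f a = f (a + q) := by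
  induction q generalizing f a with
  | zero => simp
  | succ n ih =>
    rw [pow_succ, Module.End.mul_apply]
    show ((shE R) ^ n) (shE R f) a = f (a + (n + 1))
    rw [ih]
    show f (a + n + 1) = f (a + (n + 1))
    ring_nf

lemma aeval_shE_pow_apply (q : ℕ) (S : Polynomial ℤ) (f : ℕ → R) (a : ℕ) :
    (Polynomial.aeval ((shE R) ^ q) S) f a = S.sum (fun j c => c • f (a + q * j)) := by
  induction S using Polynomial.induction_on' with
  | add P Q hP hQ =>
    rw [map_add, LinearMap.add_apply, Pi.add_apply, hP, hQ,
      Polynomial.sum_add_index P Q (fun j c => c • f (a + q * j))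
        (fun i => zero_smul ℤ _) (fun i b₁ b₂ => add_smul b₁ b₂ _)]
  | monomial n c =>
    rw [Polynomial.aeval_monomial, Module.End.mul_apply,
      Polynomial.sum_monomial_index _ _ (zero_smul ℤ _), ← pow_mul,
      Module.algebraMap_end_apply, Pi.smul_apply, shE_pow_apply]

end Shift

lemma exists_of_map_zmod_eq_zero (p : ℕ) (q : Polynomial ℤ)
    (h : q.map (Int.castRingHom (ZMod p)) = 0) : ∃ r : Polynomial ℤ, q = C (p : ℤ) * r := by
  have : C (p : ℤ) ∣ q := by
    rw [Polynomial.C_dvd_iff_dvd_coeff]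
    intro n
    have h2 := congrArg (fun Q => Polynomial.coeff Q n) h
    simp only [Polynomial.coeff_map, Polynomial.coeff_zero, Int.coe_castRingHom] at h2
    exact (ZMod.intCast_zmod_eq_zero_iff_dvd _ _).mp h2
  exact this

lemma lemA (p : ℕ) (hp : p.Prime) :
    ∃ T : Polynomial ℤ, ((X : Polynomial ℤ) - 1) ^ p = (X ^ p - 1) + C (p : ℤ) * T := by
  haveI : Fact p.Prime := ⟨hp⟩
  have hmap : ((((X : Polynomial ℤ) - 1) ^ p - (X ^ p - 1)).map (Int.castRingHom (ZMod p))) = 0 := by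
    simp only [Polynomial.map_sub, Polynomial.map_pow, Polynomial.map_one, Polynomial.map_X]
    rw [sub_pow_char]; ring
  obtain ⟨T, hT⟩ := exists_of_map_zmod_eq_zero p _ hmap
  exact ⟨T, by linear_combination hT⟩

lemma lemC (p : ℕ) (P : Polynomial ℤ) :
    ∃ Q : Polynomial ℤ, P.comp (X + C (p : ℤ)) - P = C (p : ℤ) * Q := by
  apply exists_of_map_zmod_eq_zero
  rw [Polynomial.map_sub, Polynomial.map_comp, Polynomial.map_add, Polynomial.map_X,
    Polynomial.map_C]
  simp

lemma lemBint (p : ℕ) (m : ℕ) (P : Polynomial ℤ) (b : ℕ) :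
    ∃ z : ℤ, (Polynomial.aeval ((shE ℤ) ^ p) (((X : Polynomial ℤ) - 1) ^ m))
      (fun n => P.eval (n : ℤ)) b = (p : ℤ) ^ m * z := by
  induction m generalizing P with
  | zero => exact ⟨P.eval (b : ℤ), by simp⟩
  | succ m ih =>
    obtain ⟨Q, hQ⟩ := lemC p P
    have step : (Polynomial.aeval ((shE ℤ) ^ p) ((X : Polynomial ℤ) - 1))
        (fun n => P.eval (n : ℤ)) = (p : ℤ) • (fun n : ℕ => Q.eval (n : ℤ)) := by
      funext n
      have h1 : ((X : Polynomial ℤ) - 1) = X - 1 := rfl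
      rw [map_sub, Polynomial.aeval_X, map_one, LinearMap.sub_apply, Pi.sub_apply]
      have h2 := congrArg (fun q => Polynomial.eval ((n : ℤ)) q) hQ
      simp only [Polynomial.eval_sub, Polynomial.eval_comp, Polynomial.eval_add,
        Polynomial.eval_X, Polynomial.eval_C, Polynomial.eval_mul] at h2
      have h3 : ((shE ℤ) ^ p) (fun n => P.eval (n : ℤ)) n = P.eval ((n : ℤ) + p) := by
        rw [shE_pow_apply]; push_cast; ring_nf
      rw [h3]
      show P.eval ((n : ℤ) + p) - P.eval (n : ℤ) = (p : ℤ) * Q.eval (n : ℤ)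
      rw [← h2]
    obtain ⟨z, hz⟩ := ih Q
    refine ⟨z, ?_⟩
    rw [pow_succ, map_mul, Module.End.mul_apply, step, map_smul, Pi.smul_apply, hz,
      smul_eq_mul]
    ring

lemma natDegree_X_sub_one_pow_le (m : ℕ) :
    (((X : Polynomial ℤ) - 1) ^ m).natDegree ≤ m := by
  calc (((X : Polynomial ℤ) - 1) ^ m).natDegree ≤ m * ((X : Polynomial ℤ) - 1).natDegree :=
        Polynomial.natDegree_pow_le
    _ ≤ m * 1 := by
        apply Nat.mul_le_mul_left
        have : ((X : Polynomial ℤ) - 1) = X - C 1 := by simp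
        rw [this, Polynomial.natDegree_X_sub_C]
    _ = m := mul_one m

lemma lemBreal (k B : ℕ) (f : ℕ → ℝ) (hconc : IsConcordant k f B) (p : ℕ)
    (m : ℕ) (hm : m ≤ k) (b : ℕ) (hb : B ≤ b) :
    ∃ z : ℤ, (Polynomial.aeval ((shE ℝ) ^ p) (((X : Polynomial ℤ) - 1) ^ m)) f b
      = (p : ℝ) ^ m * z := by
  obtain ⟨P, hP⟩ := hconc (fun i => b + p * min (i : ℕ) m)
    (fun i => le_trans hb (Nat.le_add_right _ _))
  have hf : ∀ j ≤ m, f (b + p * j) = ((P.eval (((b + p * j : ℕ) : ℤ)) : ℤ) : ℝ) := by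
    intro j hj
    have h := hP ⟨j, lt_of_le_of_lt hj (Nat.lt_succ_of_le hm)⟩
    simpa [min_eq_left hj] using h.symm
  obtain ⟨z, hz⟩ := lemBint p m P b
  refine ⟨z, ?_⟩
  rw [aeval_shE_pow_apply] at hz ⊢
  have hz' : (((X : Polynomial ℤ) - 1) ^ m).sum
      (fun j c => c • P.eval (((b + p * j : ℕ) : ℤ))) = (p : ℤ) ^ m * z := hz
  have heq : (((X : Polynomial ℤ) - 1) ^ m).sum (fun j c => c • f (b + p * j))
      = (((((X : Polynomial ℤ) - 1) ^ m).sum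
          (fun j c => c • P.eval (((b + p * j : ℕ) : ℤ))) : ℤ) : ℝ) := by
    rw [Polynomial.sum_def, Polynomial.sum_def, Int.cast_sum]
    refine Finset.sum_congr rfl fun j hj => ?_
    have hjm : j ≤ m :=
      le_trans (Polynomial.le_natDegree_of_mem_supp j hj) (natDegree_X_sub_one_pow_le m)
    rw [hf j hjm]
    push_cast [zsmul_eq_mul]
    ring
  rw [heq, hz']
  push_cast
  ring

theorem stmt14 (k : ℕ) (hk : 1 ≤ k) (f : ℕ → ℝ) (B : ℕ)
    (hconc : IsConcordant k f B) (a : ℕ) (ha : B ≤ a) (p : ℕ) (hp : p.Prime) :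
    ∃ m : ℤ, fwdD^[k * p] f a = ((p : ℝ) ^ k) * (m : ℝ) := by
  classical
  obtain ⟨T, hT⟩ := lemA p hp
  have h1 : fwdD^[k * p] f a
      = (Polynomial.aeval (shE ℝ) (((X : Polynomial ℤ) - 1) ^ (k * p))) f a := by
    rw [map_pow, Module.End.pow_apply]
    have hE : ⇑(Polynomial.aeval (shE ℝ) ((X : Polynomial ℤ) - 1)) = fwdD := by
      funext g a'
      rw [map_sub, Polynomial.aeval_X, map_one, LinearMap.sub_apply, Pi.sub_apply]
      rfl
    rw [hE]
  rw [h1]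
  have hexp : ((X : Polynomial ℤ) - 1) ^ (k * p)
      = ∑ i ∈ Finset.range (k + 1), C ((p : ℤ) ^ (k - i) * (k.choose i)) *
          (T ^ (k - i) * (((X : Polynomial ℤ) - 1) ^ i).comp (X ^ p)) := by
    rw [mul_comm k p, pow_mul, hT, add_pow]
    refine Finset.sum_congr rfl fun i hi => ?_
    rw [Polynomial.pow_comp, Polynomial.sub_comp, Polynomial.X_comp, Polynomial.one_comp,
      mul_pow, map_mul, map_pow]
    push_cast [Polynomial.C_eq_natCast]
    ring
  rw [hexp, map_sum, LinearMap.sum_apply, Finset.sum_apply]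
  have key : ∀ i, i < k + 1 → ∃ w : ℤ,
      (Polynomial.aeval (shE ℝ) (C ((p : ℤ) ^ (k - i) * (k.choose i)) *
        (T ^ (k - i) * (((X : Polynomial ℤ) - 1) ^ i).comp (X ^ p)))) f a
        = (p : ℝ) ^ k * w := by
    intro i hi
    have hik : i ≤ k := Nat.lt_succ_iff.mp hi
    set g : ℕ → ℝ := (Polynomial.aeval ((shE ℝ) ^ p) (((X : Polynomial ℤ) - 1) ^ i)) f with hg
    obtain ⟨z, hz⟩ : ∃ z : ℕ → ℤ, ∀ j : ℕ, g (a + 1 * j) = (p : ℝ) ^ i * z j := by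
      have h := fun j : ℕ => lemBreal k B f hconc p i hik (a + 1 * j)
        (le_trans ha (Nat.le_add_right _ _))
      choose z hz using h
      exact ⟨z, hz⟩
    refine ⟨(k.choose i : ℤ) * ((T ^ (k - i)).sum (fun j c => c * z j)), ?_⟩
    have hcomp : (Polynomial.aeval (shE ℝ)) ((((X : Polynomial ℤ) - 1) ^ i).comp (X ^ p)) f
        = g := by
      rw [Polynomial.aeval_comp,
        show (Polynomial.aeval (shE ℝ)) ((X : Polynomial ℤ) ^ p) = (shE ℝ) ^ p from by
          rw [map_pow, Polynomial.aeval_X], hg]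
    rw [map_mul (Polynomial.aeval (shE ℝ)) (C ((p : ℤ) ^ (k - i) * (k.choose i : ℤ)))
        (T ^ (k - i) * (((X : Polynomial ℤ) - 1) ^ i).comp (X ^ p)),
      Module.End.mul_apply, Polynomial.aeval_C, Module.algebraMap_end_apply, Pi.smul_apply,
      map_mul (Polynomial.aeval (shE ℝ)) (T ^ (k - i))
        ((((X : Polynomial ℤ) - 1) ^ i).comp (X ^ p)),
      Module.End.mul_apply, hcomp]
    have h4 : (Polynomial.aeval (shE ℝ) (T ^ (k - i))) g a
        = (T ^ (k - i)).sum (fun j c => c • g (a + 1 * j)) := by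
      have h := aeval_shE_pow_apply (R := ℝ) 1 (T ^ (k - i)) g a
      rwa [pow_one] at h
    rw [h4]
    have h5 : (T ^ (k - i)).sum (fun j c => c • g (a + 1 * j))
        = (p : ℝ) ^ i * (((T ^ (k - i)).sum (fun j c => c * z j) : ℤ) : ℝ) := by
      rw [Polynomial.sum_def, Polynomial.sum_def, Int.cast_sum, Finset.mul_sum]
      refine Finset.sum_congr rfl fun j hj => ?_
      rw [hz j]
      push_cast [zsmul_eq_mul]
      ring
    rw [h5, zsmul_eq_mul]
    have hpk : (p : ℝ) ^ (k - i) * (p : ℝ) ^ i = (p : ℝ) ^ k := by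
      rw [← pow_add]
      congr 1
      omega
    rw [← hpk]
    push_cast
    ring
  have key' : ∀ i : ℕ, ∃ w : ℤ, i < k + 1 →
      (Polynomial.aeval (shE ℝ) (C ((p : ℤ) ^ (k - i) * (k.choose i)) *
        (T ^ (k - i) * (((X : Polynomial ℤ) - 1) ^ i).comp (X ^ p)))) f a
        = (p : ℝ) ^ k * w := by
    intro i
    by_cases h : i < k + 1
    · obtain ⟨w, hw⟩ := key i h
      exact ⟨w, fun _ => hw⟩
    · exact ⟨0, fun hh => absurd hh h⟩
  choose w hw using key'
  refine ⟨∑ i ∈ Finset.range (k + 1), w i, ?_⟩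
  rw [Finset.sum_congr rfl (fun i hi => hw i (Finset.mem_range.mp hi)), ← Finset.mul_sum,
    Int.cast_sum]
end

section
/- Let k ≥ 1 be an integer and let f : ℕ → ℝ be k-concordant with threshold B. Then for every integer a ≥ B and every positive integer n, the value Δ^{n} f(a) is an integer divisible by ∏_{ℓ=1}^{k} ∏_{p prime, p ≤ n/ℓ} p (an empty product being 1). -/
open scoped Classical

/-!
Fix a prime `p` and put `t = min k ⌊n/p⌋`. With `E` the shift, `Δ = E - 1` and
`(E - 1)^p = (E^p - 1) + p S(E)` for some `S ∈ ℤ[X]`, so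
`Δ^n = ((E^p - 1) + p S(E))^t (E - 1)^(n - tp)` is a sum of terms `p^(t-i) Δ_p^i Q(E)` with
`i ≤ t ≤ k`, where `Δ_p = E^p - 1` is the difference with step `p`. The integer-valued
`k`-concordant functions form a shift-invariant `ℤ`-module, and for such a `g` the value
`Δ_p^i g(y)` only involves the `i + 1 ≤ k + 1` values `g(y + jp)`, which some `P ∈ ℤ[X]`
interpolates; but `Δ_p^i P` is divisible by `p^i`. Hence `p^t ∣ Δ^n g`, and the product in the
theorem is `∏_{p ≤ n} p^(min k ⌊n/p⌋)`.
-/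

open Finset Polynomial fwdDiff fwdDiff_aux

lemma Polynomial.C_dvd_comp_X_add_C_sub {R : Type*} [CommRing R] (P : R[X]) (h : R) :
    C h ∣ P.comp (X + C h) - P := by
  have := sub_dvd_eval_sub (X + C h) X (P.map C)
  rwa [add_sub_cancel_left, eval_map, eval_map, eval₂_C_X] at this

lemma Polynomial.pow_dvd_fwdDiff_iter_eval {R : Type*} [CommRing R] (h : R) (m : ℕ) (P : R[X])
    (y : R) : h ^ m ∣ (Δ_[h])^[m] (fun x => P.eval x) y := by
  induction m generalizing P with
  | zero => simp
  | succ m ih =>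
    obtain ⟨Q, hQ⟩ := P.C_dvd_comp_X_add_C_sub h
    have hΔ : Δ_[h] (fun x => P.eval x) = h • fun x => Q.eval x := by
      funext x
      simpa [fwdDiff] using congrArg (eval x) hQ
    rw [Function.iterate_succ_apply, hΔ, fwdDiff_iter_const_smul, Pi.smul_apply, smul_eq_mul,
      pow_succ']
    exact mul_dvd_mul_left h (ih Q)

lemma exists_sub_one_pow_prime_eq {R : Type*} [CommRing R] {p : ℕ} (hp : p.Prime) (x : R) :
    ∃ s, (x - 1) ^ p = x ^ p - 1 + p * s := by
  obtain ⟨r, hr⟩ := exists_add_pow_prime_eq hp (x - 1) 1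
  rw [sub_add_cancel, one_pow] at hr
  exact ⟨-((x - 1) * r), by linear_combination -hr⟩

lemma exists_sub_one_pow_eq_sum {R : Type*} [CommRing R] {p t n : ℕ} (hp : p.Prime)
    (htn : t * p ≤ n) (x : R) :
    ∃ q : ℕ → R,
      (x - 1) ^ n = ∑ i ∈ range (t + 1), (p : R) ^ (t - i) * ((x ^ p - 1) ^ i * q i) := by
  obtain ⟨s, hs⟩ := exists_sub_one_pow_prime_eq hp x
  refine ⟨fun i => t.choose i * s ^ (t - i) * (x - 1) ^ (n - t * p), ?_⟩
  have hsplit : (x - 1) ^ n = ((x - 1) ^ p) ^ t * (x - 1) ^ (n - t * p) := by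
    rw [← pow_mul, ← pow_add, mul_comm p t, Nat.add_sub_cancel' htn]
  rw [hsplit, hs, add_pow, sum_mul]
  refine sum_congr rfl fun i _ => ?_
  ring

def concordantSubmodule (k : ℕ) : Submodule ℤ (ℕ → ℤ) where
  carrier := {g | ∀ m : Fin (k + 1) → ℕ, ∃ P : ℤ[X], ∀ i, P.eval (m i : ℤ) = g (m i)}
  add_mem' := by
    rintro g₁ g₂ h₁ h₂ m
    obtain ⟨P₁, hP₁⟩ := h₁ m
    obtain ⟨P₂, hP₂⟩ := h₂ m
    exact ⟨P₁ + P₂, fun i => by simp [hP₁, hP₂]⟩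
  zero_mem' := fun _ => ⟨0, fun _ => by simp⟩
  smul_mem' := by
    rintro c g hg m
    obtain ⟨P, hP⟩ := hg m
    exact ⟨C c * P, fun i => by simp [hP]⟩

lemma concordantSubmodule_le_comap_shiftₗ (k : ℕ) :
    concordantSubmodule k ≤ (concordantSubmodule k).comap (shiftₗ ℕ ℤ 1) := by
  intro g hg m
  obtain ⟨P, hP⟩ := hg (m · + 1)
  exact ⟨P.comp (X + 1), fun i => by simpa [shiftₗ_apply] using hP i⟩

lemma aeval_shiftₗ_mem_concordantSubmodule {k : ℕ} {g : ℕ → ℤ} (hg : g ∈ concordantSubmodule k)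
    (Q : ℤ[X]) : aeval (shiftₗ ℕ ℤ 1) Q g ∈ concordantSubmodule k :=
  aeval_apply_smul_mem_of_le_comap hg Q _ (concordantSubmodule_le_comap_shiftₗ k)

lemma pow_dvd_fwdDiff_iter_of_mem_concordantSubmodule {k m : ℕ} {g : ℕ → ℤ}
    (hg : g ∈ concordantSubmodule k) (hm : m ≤ k) (h y : ℕ) :
    (h : ℤ) ^ m ∣ (Δ_[h])^[m] g y := by
  obtain ⟨P, hP⟩ := hg fun i => y + min (i : ℕ) m • h
  have hΔ : (Δ_[h])^[m] g y = (Δ_[(h : ℤ)])^[m] (fun x => P.eval x) y := by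
    simp only [fwdDiff_iter_eq_sum_shift]
    refine sum_congr rfl fun j hj => ?_
    have hjm : j ≤ m := Nat.lt_succ_iff.mp (mem_range.mp hj)
    have := hP ⟨j, by omega⟩
    simp only [min_eq_left hjm] at this
    rw [← this, smul_eq_mul j h, Nat.cast_add, Nat.cast_mul, nsmul_eq_mul]
  exact hΔ ▸ pow_dvd_fwdDiff_iter_eval _ m P y

lemma aeval_shiftₗ_X_pow_sub_one (h : ℕ) :
    aeval (shiftₗ ℕ ℤ 1) (X ^ h - 1 : ℤ[X]) = fwdDiffₗ ℕ ℤ h := by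
  ext g y
  simp [shiftₗ_pow_apply, fwdDiff]

lemma pow_min_dvd_fwdDiff_iter_of_mem_concordantSubmodule {k : ℕ} {g : ℕ → ℤ}
    (hg : g ∈ concordantSubmodule k) {p : ℕ} (hp : p.Prime) (n y : ℕ) :
    (p : ℤ) ^ min k (n / p) ∣ (Δ_[1])^[n] g y := by
  set t := min k (n / p)
  obtain ⟨q, hq⟩ := exists_sub_one_pow_eq_sum (t := t) hp
    ((Nat.mul_le_mul_right p (min_le_right _ _)).trans (Nat.div_mul_le_self n p)) (X : ℤ[X])
  have hexpand : (Δ_[1])^[n] g y =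
      ∑ i ∈ range (t + 1), (p : ℤ) ^ (t - i) * (Δ_[p])^[i] (aeval (shiftₗ ℕ ℤ 1) (q i) g) y := by
    have := congrArg (fun Q => aeval (shiftₗ ℕ ℤ 1) Q g y) hq
    have h1 : aeval (shiftₗ ℕ ℤ 1) (X - 1 : ℤ[X]) = fwdDiffₗ ℕ ℤ 1 := by
      simpa using aeval_shiftₗ_X_pow_sub_one 1
    simp only [map_pow, map_sum, map_mul, h1, aeval_shiftₗ_X_pow_sub_one] at this
    simp only [map_natCast, LinearMap.sum_apply, Module.End.mul_apply, coe_fwdDiffₗ_pow,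
      Finset.sum_apply] at this
    refine this.trans (sum_congr rfl fun i _ => ?_)
    rw [← Nat.cast_pow, Module.End.natCast_apply, Pi.smul_apply, nsmul_eq_mul, Nat.cast_pow]
  rw [hexpand]
  refine dvd_sum fun i hi => ?_
  have hit : i ≤ t := Nat.lt_succ_iff.mp (mem_range.mp hi)
  rw [← pow_sub_mul_pow (p : ℤ) hit]
  exact mul_dvd_mul_left _ (pow_dvd_fwdDiff_iter_of_mem_concordantSubmodule
    (aeval_shiftₗ_mem_concordantSubmodule hg (q i)) (hit.trans (min_le_left _ _)) p y)

lemma IsConcordant.intCast_floor_eq {k B : ℕ} {f : ℕ → ℝ} (hf : IsConcordant k f B) {x : ℕ}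
    (hx : B ≤ x) : (⌊f x⌋ : ℝ) = f x := by
  obtain ⟨P, hP⟩ := hf (fun _ => x) fun _ => hx
  rw [← hP 0, Int.floor_intCast]

lemma IsConcordant.floor_comp_add_mem_concordantSubmodule {k B : ℕ} {f : ℕ → ℝ}
    (hf : IsConcordant k f B) {a : ℕ} (ha : B ≤ a) :
    (fun x => ⌊f (a + x)⌋) ∈ concordantSubmodule k := by
  intro m
  obtain ⟨P, hP⟩ := hf (a + m ·) fun _ => ha.trans (Nat.le_add_right _ _)
  refine ⟨P.comp (C (a : ℤ) + X), fun i => ?_⟩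
  simp [← hP i, Int.floor_intCast]

lemma fwdD_iter_eq_fwdDiff_iter {f : ℕ → ℝ} {g : ℕ → ℤ} {a : ℕ} (hg : ∀ x, (g x : ℝ) = f (a + x))
    (n : ℕ) : fwdD^[n] f a = (Δ_[1])^[n] g 0 := by
  change (Δ_[1])^[n] f a = _
  simp [fwdDiff_iter_eq_sum_shift, hg, add_comm]

lemma natCast_le_div_natCast_iff {p ℓ n : ℕ} (hp : 0 < p) (hℓ : 0 < ℓ) :
    (p : ℝ) ≤ n / ℓ ↔ ℓ ≤ n / p := by
  rw [le_div_iff₀ (by exact_mod_cast hℓ), Nat.le_div_iff_mul_le hp, mul_comm]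
  exact_mod_cast Iff.rfl

lemma prod_Icc_prod_primes_le_div_eq (k n : ℕ) :
    ∏ ℓ ∈ Icc 1 k, ∏ p ∈ (range (n + 1)).filter (fun p : ℕ => p.Prime ∧ (p : ℝ) ≤ n / ℓ), p
      = ∏ p ∈ (range (n + 1)).filter Nat.Prime, p ^ min k (n / p) := by
  rw [prod_comm' (t' := (range (n + 1)).filter Nat.Prime) (s' := fun p => Icc 1 (min k (n / p)))]
  · simp
  · intro ℓ p
    simp only [mem_Icc, mem_filter, mem_range, le_min_iff]
    constructor
    · rintro ⟨⟨hℓ, hℓk⟩, hpn, hp, hpℓ⟩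
      exact ⟨⟨hℓ, hℓk, (natCast_le_div_natCast_iff hp.pos hℓ).1 hpℓ⟩, hpn, hp⟩
    · rintro ⟨⟨hℓ, hℓk, hℓp⟩, hpn, hp⟩
      exact ⟨⟨hℓ, hℓk⟩, hpn, hp, (natCast_le_div_natCast_iff hp.pos hℓ).2 hℓp⟩

theorem stmt15_general (k : ℕ) (f : ℕ → ℝ) (B : ℕ)
    (hconc : IsConcordant k f B) (a : ℕ) (ha : B ≤ a) (n : ℕ) :
    ∃ m : ℤ, fwdD^[n] f a =
      ((∏ ℓ ∈ Finset.Icc 1 k,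
          ∏ p ∈ (Finset.range (n + 1)).filter
            (fun p : ℕ => p.Prime ∧ (p : ℝ) ≤ (n : ℝ) / (ℓ : ℝ)), p : ℕ) : ℝ) * (m : ℝ) := by
  set g : ℕ → ℤ := fun x => ⌊f (a + x)⌋
  have hg := hconc.floor_comp_add_mem_concordantSubmodule ha
  have hgf (x : ℕ) : (g x : ℝ) = f (a + x) :=
    hconc.intCast_floor_eq (ha.trans (Nat.le_add_right a x))
  have hdvd : ((∏ p ∈ (range (n + 1)).filter Nat.Prime, p ^ min k (n / p) : ℕ) : ℤ) ∣
      (Δ_[1])^[n] g 0 := by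
    push_cast
    refine prod_dvd_of_coprime (fun p hp q hq hpq => ?_) fun p hp =>
      pow_min_dvd_fwdDiff_iter_of_mem_concordantSubmodule hg (mem_filter.1 hp).2 n 0
    exact Nat.isCoprime_iff_coprime.2
      (((Nat.coprime_primes (mem_filter.1 hp).2 (mem_filter.1 hq).2).2 hpq).pow _ _)
  obtain ⟨m, hm⟩ := hdvd
  refine ⟨m, ?_⟩
  rw [prod_Icc_prod_primes_le_div_eq, fwdD_iter_eq_fwdDiff_iter hgf, hm]
  norm_cast

theorem stmt15 (k : ℕ) (hk : 1 ≤ k) (f : ℕ → ℝ) (B : ℕ)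
    (hconc : IsConcordant k f B) (a : ℕ) (ha : B ≤ a) (n : ℕ) (hn : 1 ≤ n) :
    ∃ m : ℤ, fwdD^[n] f a =
      ((∏ ℓ ∈ Finset.Icc 1 k,
          ∏ p ∈ (Finset.range (n + 1)).filter
            (fun p : ℕ => p.Prime ∧ (p : ℝ) ≤ (n : ℝ) / (ℓ : ℝ)), p : ℕ) : ℝ) * (m : ℝ) :=
  stmt15_general k f B hconc a ha n
end

section
/- Let k ≥ 1 be an integer and let g : ℋ(−2) → ℂ be analytic. Suppose there are real numbers ε and C with 0 < ε < 1 and C > 0 such that |g(z)| ≤ C^{Re(z) + ε·|z|} for all z ∈ ℋ(−2), and such that C^{1+ε} < e^{γ_k} + 1. Then there exists a real C⋆ with 0 < C⋆ < e^{γ_k} such that |Δ^{n} g(0)| ≤ C⋆^{n} for all sufficiently large n. -/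
/-- Forward difference operator on functions `ℂ → ℂ`: `Δ g z = g (z+1) - g z`. -/
noncomputable def cfwdD (g : ℂ → ℂ) : ℂ → ℂ := fun z => g (z + 1) - g z

/-- The `k`-th harmonic number `γ_k = ∑_{j=1}^{k} 1/j`. -/
noncomputable def harmonic' (k : ℕ) : ℝ := ∑ j ∈ Finset.Icc 1 k, (1 : ℝ) / j

/-!
Newton's formula and Cauchy's integral formula give `Δⁿ g(0) = (2πi)⁻¹ ∮ n! g(z) / ∏ (z - j) dz`,
the product over `j ≤ n` and the circle any one around `0, …, n`.
Bound `g` by `A B^{(Re z + |z|)/2}` with `B = max (C^{1+ε}) 2` and integrate over the circle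
with diameter `[-1, U]`, `U = nB/(B-1)`. A point of it with `Re z + 1 = (U+1)t²` satisfies
`|z - j|² = t²(U-j)² + (1-t²)(j+1)²`, so `log |z - j|` dominates the interpolation with
weight `Λ = (t+t²)/2` between `log (U - j)` and `log (j + 1) - 1/4`, while
`(Re z + |z|)/2 ≤ Λ(U+1)`. The integrand is therefore bounded by the larger of its values at
`Λ = 0` and `Λ = 1`, which are `exp((n+1)/4)` and, by Stirling-type estimates, at most
`e³B(B-1)^{n+1}`. Hence `Δⁿ g(0) = O(n ρⁿ)` with `ρ = max (e^{1/4}) (B-1)`, and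
`ρ < e^{γ_k}` is the hypothesis `C^{1+ε} < e^{γ_k} + 1` together with `γ_k ≥ 1`.
-/

open Finset Metric Real Filter Asymptotics fwdDiff
open scoped Nat

lemma fwdDiff_iter_apply_zero_eq_sum (f : ℂ → ℂ) (n : ℕ) :
    Δ_[1] ^[n] f 0 = ∑ k ∈ range (n + 1), ((-1 : ℂ) ^ (n - k) * n.choose k) * f k := by
  simp [fwdDiff_iter_eq_sum_shift]

lemma fwdDiff_iter_inv_sub {𝕜 : Type*} [Field 𝕜] (n : ℕ) (u : 𝕜)
    (hu : ∀ j ∈ range (n + 1), u - j ≠ 0) :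
    Δ_[1] ^[n] (fun w => (u - w)⁻¹) 0 = n ! / ∏ j ∈ range (n + 1), (u - j) := by
  induction n generalizing u with
  | zero => simp
  | succ n ih =>
    have hu' : ∀ j ∈ range (n + 1), u - 1 - j ≠ 0 := fun j hj => by
      simpa [sub_sub, add_comm] using hu (j + 1) (by simp at hj ⊢; omega)
    have hshift : Δ_[1] ^[n] (fun w => (u - w)⁻¹) 1 =
        n ! / ∏ j ∈ range (n + 1), (u - 1 - j) := by
      rw [← zero_add (1 : 𝕜), ← fwdDiff_iter_comp_add, zero_add, ← ih (u - 1) hu']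
      simp only [sub_add_eq_sub_sub, sub_right_comm]
    rw [Function.iterate_succ_apply', fwdDiff, zero_add, hshift,
      ih u fun j hj => hu j (by simp at hj ⊢; omega)]
    set P := ∏ j ∈ range (n + 1), (u - 1 - j)
    set Q := ∏ j ∈ range (n + 1), (u - j)
    have hPu : ∏ j ∈ range (n + 1 + 1), (u - j) = u * P := by
      rw [prod_range_succ', mul_comm]
      simp [P, sub_sub, add_comm]
    have hQu : ∏ j ∈ range (n + 1 + 1), (u - j) = Q * (u - (n + 1)) := by
      rw [prod_range_succ]; push_cast; ring
    have hF : ∏ j ∈ range (n + 1 + 1), (u - j) ≠ 0 := prod_ne_zero_iff.2 hu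
    have hP : P ≠ 0 := prod_ne_zero_iff.2 hu'
    have hQ : Q ≠ 0 := prod_ne_zero_iff.2 fun j hj => hu j (by simp at hj ⊢; omega)
    rw [div_sub_div _ _ hP hQ, div_eq_div_iff (mul_ne_zero hP hQ) hF, Nat.factorial_succ]
    push_cast
    linear_combination (↑n ! * Q) * hPu - (↑n ! * P) * hQu

lemma norm_fwdDiff_iter_le_of_sphere {g : ℂ → ℂ} {c : ℂ} {R : ℝ}
    (hg : DifferentiableOn ℂ g (closedBall c R)) {n : ℕ}
    (hnodes : ∀ j ∈ range (n + 1), (j : ℂ) ∈ ball c R) {M : ℝ}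
    (hM : ∀ z ∈ sphere c R, n ! * ‖g z‖ ≤ M * ∏ j ∈ range (n + 1), ‖z - j‖) :
    ‖Δ_[1] ^[n] g 0‖ ≤ R * M := by
  have hR : 0 < R := pos_of_mem_ball (hnodes 0 (by simp))
  have hd := hg.diffContOnCl_ball subset_rfl
  have hne : ∀ z ∈ sphere c R, ∀ j ∈ range (n + 1), z - j ≠ 0 := fun z hz j hj =>
    sub_ne_zero.2 fun h => (mem_ball.1 (hnodes j hj)).ne (h ▸ mem_sphere.1 hz)
  have hint : ∀ j ∈ range (n + 1), ∀ a : ℂ,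
      CircleIntegrable (fun z => a * ((z - j)⁻¹ * g z)) c R :=
    fun j hj a => ContinuousOn.circleIntegrable hR.le <| continuousOn_const.mul <|
      ((continuousOn_id.sub continuousOn_const).inv₀ fun z hz => hne z hz j hj).mul
        (hg.continuousOn.mono sphere_subset_closedBall)
  have hkernel : ∀ z ∈ sphere c R, ∑ k ∈ range (n + 1),
      ((-1 : ℂ) ^ (n - k) * n.choose k) * ((z - k)⁻¹ * g z) =
        (n ! / ∏ j ∈ range (n + 1), (z - j)) * g z := fun z hz => by
    rw [← fwdDiff_iter_inv_sub n z (hne z hz), fwdDiff_iter_apply_zero_eq_sum, sum_mul]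
    simp only [mul_assoc]
  have hrep : Δ_[1] ^[n] g 0 = (2 * π * Complex.I : ℂ)⁻¹ •
      ∮ z in C(c, R), (n ! / ∏ j ∈ range (n + 1), (z - j)) * g z := by
    rw [← circleIntegral.integral_congr hR.le hkernel,
      circleIntegral.integral_fun_sum fun k hk => hint k hk _, smul_sum,
      fwdDiff_iter_apply_zero_eq_sum]
    refine sum_congr rfl fun k hk => ?_
    rw [circleIntegral.integral_const_mul, smul_eq_mul, mul_left_comm, ← smul_eq_mul,
      ← hd.two_pi_i_inv_smul_circleIntegral_sub_inv_smul (hnodes k hk)]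
    simp only [smul_eq_mul]
  rw [hrep]
  refine circleIntegral.norm_two_pi_i_inv_smul_integral_le_of_norm_le_const hR.le fun z hz => ?_
  have hprod : 0 < ∏ j ∈ range (n + 1), ‖z - j‖ :=
    prod_pos fun j hj => norm_pos_iff.2 (hne z hz j hj)
  rw [norm_mul, norm_div, norm_prod, Complex.norm_natCast, div_mul_eq_mul_div, div_le_iff₀ hprod]
  exact hM z hz

lemma exists_sq_norm_sub_eq_of_mem_sphere {a b : ℝ} (hab : a < b) {z : ℂ}
    (hz : z ∈ sphere (((a + b) / 2 : ℝ) : ℂ) ((b - a) / 2)) :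
    ∃ t : ℝ, 0 ≤ t ∧ t ≤ 1 ∧ z.re = a + (b - a) * t ^ 2 ∧
      ∀ x : ℝ, ‖z - x‖ ^ 2 = t ^ 2 * (b - x) ^ 2 + (1 - t ^ 2) * (x - a) ^ 2 := by
  have him : z.im ^ 2 = (z.re - a) * (b - z.re) := by
    have h := congrArg (· ^ 2) (mem_sphere_iff_norm.1 hz)
    simp only [Complex.sq_norm, Complex.normSq_apply, Complex.sub_re, Complex.sub_im,
      Complex.ofReal_re, Complex.ofReal_im, sub_zero] at h
    linear_combination h
  have hba : b - a ≠ 0 := by linarith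
  have hs0 : 0 ≤ (z.re - a) / (b - a) := div_nonneg (by nlinarith [sq_nonneg z.im]) (by linarith)
  have hs1 : (z.re - a) / (b - a) ≤ 1 :=
    (div_le_one (by linarith)).2 (by nlinarith [sq_nonneg z.im])
  have ht : √((z.re - a) / (b - a)) ^ 2 = (z.re - a) / (b - a) := sq_sqrt hs0
  refine ⟨_, sqrt_nonneg _, sqrt_le_one.2 hs1, ?_, fun x => ?_⟩
  · rw [ht]; field_simp; ring
  · rw [ht, Complex.sq_norm, Complex.normSq_apply]
    simp only [Complex.sub_re, Complex.sub_im, Complex.ofReal_re, Complex.ofReal_im, sub_zero]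
    field_simp
    linear_combination (b - a) * him

lemma mul_neg_log_le {t : ℝ} (ht0 : 0 < t) (ht1 : t ≤ 1) : t * -log t ≤ (1 - t ^ 2) / 2 := by
  have h := self_le_sinh_iff.2 (neg_nonneg.2 (log_nonpos ht0.le ht1))
  rw [sinh_eq, neg_neg, exp_neg, exp_log ht0] at h
  calc t * -log t ≤ t * ((t⁻¹ - t) / 2) := mul_le_mul_of_nonneg_left h ht0.le
    _ = (1 - t ^ 2) / 2 := by field_simp

lemma add_mul_log_le_log_add {t m x y : ℝ} (ht0 : 0 ≤ t) (ht1 : t ≤ 1) (hm : 1 / 4 ≤ m)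
    (hx : 0 < x) (hy : 0 < y) :
    (t + t ^ 2) * log y + (2 - t - t ^ 2) * (log x - m) ≤
      log (t ^ 2 * y ^ 2 + (1 - t ^ 2) * x ^ 2) := by
  have ht2 : t ^ 2 ≤ 1 := pow_le_one₀ ht0 ht1
  have hconcave : t ^ 2 * (2 * log y) + (1 - t ^ 2) * (2 * log x) ≤
      log (t ^ 2 * y ^ 2 + (1 - t ^ 2) * x ^ 2) := by
    have := strictConcaveOn_log_Ioi.concaveOn.2 (Set.mem_Ioi.2 (pow_pos hy 2))
      (Set.mem_Ioi.2 (pow_pos hx 2)) (sq_nonneg t) (sub_nonneg.2 ht2) (by ring)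
    simpa only [smul_eq_mul, log_pow, Nat.cast_ofNat] using this
  have hκ : 0 ≤ 2 - t - t ^ 2 := by nlinarith
  -- Concavity of `log` suffices unless `y ≫ x`; then `t²y²` alone suffices, since the deficit
  -- `-2 log t` is paid for by `mul_neg_log_le` and `m ≥ 1/4`.
  by_cases hsmall : (t - t ^ 2) * (log y - log x) ≤ (2 - t - t ^ 2) * m
  · linarith
  push Not at hsmall
  have htt : 0 < t - t ^ 2 := by
    by_contra h
    have : t - t ^ 2 = 0 := by nlinarith
    rw [this, zero_mul] at hsmall
    nlinarith
  have ht0' : 0 < t := by nlinarith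
  have hlog_t : 2 * log t + 2 * log y ≤ log (t ^ 2 * y ^ 2 + (1 - t ^ 2) * x ^ 2) := by
    have h := log_le_log (by positivity : 0 < t ^ 2 * y ^ 2)
      (by nlinarith [sq_nonneg x] : t ^ 2 * y ^ 2 ≤ t ^ 2 * y ^ 2 + (1 - t ^ 2) * x ^ 2)
    rwa [log_mul (by positivity) (by positivity), log_pow, log_pow, Nat.cast_ofNat] at h
  have hκsmall := mul_le_mul_of_nonneg_left hsmall.le hκ
  have hneg_log := mul_le_mul_of_nonneg_left (mul_neg_log_le ht0' ht1)
    (by linarith : 0 ≤ 2 * (1 - t))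
  have hm' : 0 ≤ (1 - t) * (1 - t ^ 2) * (2 * m * (2 + t) - 1) :=
    mul_nonneg (mul_nonneg (by linarith) (by linarith)) (by nlinarith)
  have hdeficit : -(2 - t - t ^ 2) * (log y - log x) - (2 - t - t ^ 2) * m - 2 * log t ≤ 0 := by
    refine nonpos_of_mul_nonpos_right ?_ htt
    linarith
  linarith

lemma sum_range_log_add_one (n : ℕ) : ∑ j ∈ range n, log (j + 1 : ℝ) = log n ! := by
  rw [← prod_range_add_one_eq_factorial, Nat.cast_prod, log_prod fun j _ => by positivity]
  push_cast
  rfl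

lemma factorial_mul_rpow_le_of_mem_sphere {B m U : ℝ} (hB : 1 ≤ B) (hm : 1 / 4 ≤ m) {n : ℕ}
    (hU : n < U) {z : ℂ} (hz : z ∈ sphere (((U - 1) / 2 : ℝ) : ℂ) ((U + 1) / 2)) :
    n ! * B ^ ((z.re + ‖z‖) / 2) ≤
      exp (max ((n + 1) * m) (log n ! + (U + 1) * log B - ∑ j ∈ range (n + 1), log (U - j))) *
        ∏ j ∈ range (n + 1), ‖z - j‖ := by
  obtain ⟨t, ht0, ht1, hre, hnorm⟩ := exists_sq_norm_sub_eq_of_mem_sphere (a := -1) (b := U)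
    (by linarith [n.cast_nonneg (α := ℝ)]) (by convert hz using 3 <;> ring)
  have hnorm_node : ∀ j : ℕ,
      ‖z - j‖ ^ 2 = t ^ 2 * (U - j) ^ 2 + (1 - t ^ 2) * ((j : ℝ) + 1) ^ 2 := fun j => by
    rw [← Complex.ofReal_natCast, hnorm]; ring
  have hnorm_add_one : ‖z + 1‖ = (U + 1) * t := by
    have h := hnorm (-1)
    rw [Complex.ofReal_neg, Complex.ofReal_one, sub_neg_eq_add] at h
    refine (pow_left_inj₀ (norm_nonneg _) (by nlinarith) two_ne_zero).1 ?_
    rw [h]; ring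
  set Λ := (t + t ^ 2) / 2 with hΛ
  have hΛ0 : 0 ≤ Λ := by positivity
  have hΛ1 : Λ ≤ 1 := by nlinarith
  have hexponent : (z.re + ‖z‖) / 2 ≤ Λ * (U + 1) := by
    have := norm_sub_le (z + 1) 1
    rw [add_sub_cancel_right, hnorm_add_one, norm_one] at this
    rw [hΛ, hre]; nlinarith
  have hnode : ∀ j ∈ range (n + 1),
      0 < ‖z - j‖ ∧ Λ * log (U - j) + (1 - Λ) * (log (j + 1) - m) ≤ log ‖z - j‖ := by
    intro j hj
    have hj : (j : ℝ) ≤ n := by exact_mod_cast Nat.lt_succ_iff.1 (mem_range.1 hj)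
    have hUj : 0 < U - j := by linarith
    have hlog := add_mul_log_le_log_add ht0 ht1 hm (by positivity : (0 : ℝ) < j + 1) hUj
    rw [← hnorm_node, log_pow] at hlog
    have hpos : 0 < ‖z - j‖ ^ 2 := by
      have ht2 : t ^ 2 ≤ 1 := pow_le_one₀ ht0 ht1
      have hp : 0 < (U - j) ^ 2 := by positivity
      have hq : 0 < ((j : ℝ) + 1) ^ 2 := by positivity
      rw [hnorm_node]
      rcases le_total ((U - j) ^ 2) (((j : ℝ) + 1) ^ 2) with h | h
      · nlinarith [mul_le_mul_of_nonneg_left h (sub_nonneg.2 ht2)]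
      · nlinarith [mul_le_mul_of_nonneg_left h (sq_nonneg t)]
    refine ⟨(norm_nonneg _).lt_of_ne fun h => by simp [← h] at hpos, ?_⟩
    rw [hΛ]
    push_cast at hlog
    linarith
  have hsum : Λ * ∑ j ∈ range (n + 1), log (U - j) + (1 - Λ) * (log (n + 1)! - (n + 1) * m)
      ≤ ∑ j ∈ range (n + 1), log ‖z - j‖ := by
    refine le_of_eq_of_le ?_ (sum_le_sum fun j hj => (hnode j hj).2)
    rw [← sum_range_log_add_one, sum_add_distrib, ← mul_sum, ← mul_sum, sum_sub_distrib]
    simp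
  have hfact : log n ! ≤ log (n + 1)! :=
    log_le_log (by positivity) (by exact_mod_cast Nat.factorial_le n.le_succ)
  have hlogB : 0 ≤ log B := log_nonneg hB
  set W := log n ! + (U + 1) * log B - ∑ j ∈ range (n + 1), log (U - j)
  have hkey : log n ! + (z.re + ‖z‖) / 2 * log B ≤
      max ((n + 1) * m) W + ∑ j ∈ range (n + 1), log ‖z - j‖ :=
    calc log n ! + (z.re + ‖z‖) / 2 * log B ≤ log n ! + Λ * (U + 1) * log B := by
          gcongr
      _ ≤ Λ * W + (1 - Λ) * ((n + 1) * m) + ∑ j ∈ range (n + 1), log ‖z - j‖ := by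
          linarith [mul_le_mul_of_nonneg_left hfact (sub_nonneg.2 hΛ1)]
      _ ≤ max ((n + 1) * m) W + ∑ j ∈ range (n + 1), log ‖z - j‖ := by
          linarith [mul_le_mul_of_nonneg_left (le_max_right ((n + 1) * m) W) hΛ0,
            mul_le_mul_of_nonneg_left (le_max_left ((n + 1) * m) W) (sub_nonneg.2 hΛ1)]
  calc (n ! : ℝ) * B ^ ((z.re + ‖z‖) / 2)
      = exp (log n ! + (z.re + ‖z‖) / 2 * log B) := by
        rw [exp_add, exp_log (by positivity), rpow_def_of_pos (by linarith), mul_comm (log B)]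
    _ ≤ exp (max ((n + 1) * m) W + ∑ j ∈ range (n + 1), log ‖z - j‖) := exp_le_exp.2 hkey
    _ = exp (max ((n + 1) * m) W) * ∏ j ∈ range (n + 1), ‖z - j‖ := by
        rw [exp_add, exp_sum]
        congr 1
        exact prod_congr rfl fun j hj => exp_log (hnode j hj).1

lemma log_le_add_one_mul_log_sub {a : ℝ} (ha : 0 < a) :
    log a ≤ (a + 1) * log (a + 1) - a * log a - 1 := by
  have h := one_sub_inv_le_log_of_pos (by positivity : 0 < (a + 1) / a)
  rw [log_div (by positivity) ha.ne', inv_div, one_sub_div (by positivity),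
    add_sub_cancel_left] at h
  have := mul_le_mul_of_nonneg_left h (by positivity : 0 ≤ a + 1)
  rw [mul_one_div_cancel (by positivity)] at this
  linarith

lemma add_one_mul_log_sub_le_log {a : ℝ} (ha : 0 ≤ a) :
    (a + 1) * log (a + 1) - a * log a - 1 ≤ log (a + 1) := by
  rcases ha.eq_or_lt with rfl | ha
  · simp
  have h := log_le_sub_one_of_pos (by positivity : 0 < (a + 1) / a)
  rw [log_div (by positivity) ha.ne', div_sub_one ha.ne', add_sub_cancel_left] at h
  have := mul_le_mul_of_nonneg_left h ha.le
  rw [mul_one_div_cancel ha.ne'] at this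
  linarith

lemma log_factorial_le (n : ℕ) : log n ! ≤ (n + 1) * log (n + 1) - n := by
  induction n with
  | zero => simp
  | succ n ih =>
    rw [Nat.factorial_succ, Nat.cast_mul, log_mul (by positivity) (by positivity)]
    have := log_le_add_one_mul_log_sub (by positivity : (0 : ℝ) < n + 1)
    push_cast
    linarith

lemma sub_le_sum_log_sub {U : ℝ} {n : ℕ} (hU : n + 1 ≤ U) :
    U * log U - (U - (n + 1)) * log (U - (n + 1)) - (n + 1) ≤
      ∑ j ∈ range (n + 1), log (U - j) := by
  induction n with
  | zero =>
    have := add_one_mul_log_sub_le_log (by linarith : 0 ≤ U - 1)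
    simp only [sub_add_cancel] at this
    simpa using this
  | succ n ih =>
    rw [sum_range_succ]
    push_cast at hU ⊢
    have := add_one_mul_log_sub_le_log (by linarith : 0 ≤ U - (n + 1 + 1))
    have h : U - (n + 1 + 1) + 1 = U - (n + 1) := by ring
    rw [h] at this
    linarith [ih (by linarith)]

-- With `U = nB/(B-1)` the terms of order `n log n` and `n` cancel, leaving the rate `B - 1`.
lemma log_factorial_add_sub_sum_log_le {B : ℝ} (hB : 1 < B) {n : ℕ} (hn : B - 1 < n) :
    log n ! + (n * B / (B - 1) + 1) * log B - ∑ j ∈ range (n + 1), log (n * B / (B - 1) - j) ≤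
      log B + 3 + (n + 1) * log (B - 1) := by
  have hB1 : 0 < B - 1 := by linarith
  have hn0 : (0 : ℝ) < n := hB1.trans hn
  have hn1 : (1 : ℝ) ≤ n := Nat.one_le_cast.2 (Nat.cast_pos.1 hn0)
  set V := n / (B - 1) - 1 with hV_def
  have hV : 0 < V := by rw [hV_def, sub_pos, one_lt_div hB1]; exact hn
  have hU : n * B / (B - 1) = n + 1 + V := by rw [hV_def]; field_simp; ring
  have hlogU : log (n + 1 + V) = log n + log B - log (B - 1) := by
    rw [← hU, log_div (by positivity) hB1.ne', log_mul hn0.ne' (by positivity)]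
  have hlogV : V * log V ≤ V * (log n - log (B - 1)) := by
    rw [← log_div hn0.ne' hB1.ne']
    exact mul_le_mul_of_nonneg_left (log_le_log hV (by linarith)) hV.le
  have hlog_succ : (n + 1) * log (n + 1) ≤ (n + 1) * log n + 2 := by
    have h := log_le_sub_one_of_pos (by positivity : (0 : ℝ) < (n + 1) / n)
    rw [log_div (by positivity) hn0.ne', div_sub_one hn0.ne', add_sub_cancel_left] at h
    have h2 := mul_le_mul_of_nonneg_left h (by positivity : (0 : ℝ) ≤ n + 1)
    have h3 : (n + 1) * (1 / n) ≤ (2 : ℝ) := by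
      rw [mul_one_div, div_le_iff₀ hn0]; linarith
    linarith
  have hsum := sub_le_sum_log_sub (U := n + 1 + V) (n := n) (by linarith)
  rw [add_sub_cancel_left, hlogU] at hsum
  rw [hU]
  linarith [log_factorial_le n]

lemma norm_fwdDiff_iter_le {g : ℂ → ℂ} (hg : DifferentiableOn ℂ g {z : ℂ | -1 ≤ z.re})
    {A B : ℝ} (hB : 1 < B)
    (hgb : ∀ z : ℂ, -1 ≤ z.re → ‖g z‖ ≤ A * B ^ ((z.re + ‖z‖) / 2))
    {n : ℕ} (hn : B - 1 < n) :
    ‖Δ_[1] ^[n] g 0‖ ≤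
      (n * B / (B - 1) + 1) / 2 *
        (A * exp (max ((n + 1) / 4) (log B + 3 + (n + 1) * log (B - 1)))) := by
  set U := n * B / (B - 1) with hU_def
  have hnU : n + 1 < U := by
    rw [hU_def, lt_div_iff₀ (by linarith)]; nlinarith
  have hre : closedBall (((U - 1) / 2 : ℝ) : ℂ) ((U + 1) / 2) ⊆ {z : ℂ | -1 ≤ z.re} := by
    intro z hz
    have h := (Complex.abs_re_le_norm _).trans (mem_closedBall_iff_norm.1 hz)
    rw [Complex.sub_re, Complex.ofReal_re] at h
    show -1 ≤ z.re
    linarith [neg_abs_le (z.re - (U - 1) / 2)]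
  have hA : 0 ≤ A := by simpa using (norm_nonneg _).trans (hgb 0 (by simp))
  refine norm_fwdDiff_iter_le_of_sphere (c := (((U - 1) / 2 : ℝ) : ℂ)) (hg.mono hre)
    (fun j hj => ?_) fun z hz => ?_
  · have hj : (j : ℝ) ≤ n := by exact_mod_cast Nat.lt_succ_iff.1 (mem_range.1 hj)
    rw [mem_ball_iff_norm, ← Complex.ofReal_natCast, ← Complex.ofReal_sub, Complex.norm_real,
      Real.norm_eq_abs, abs_lt]
    constructor <;> linarith [j.cast_nonneg (α := ℝ)]
  · have hsphere := factorial_mul_rpow_le_of_mem_sphere hB.le le_rfl (by linarith) hz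
    have hW := log_factorial_add_sub_sum_log_le hB hn
    rw [← hU_def] at hW
    calc (n ! : ℝ) * ‖g z‖ ≤ A * (n ! * B ^ ((z.re + ‖z‖) / 2)) := by
          rw [mul_left_comm]
          exact mul_le_mul_of_nonneg_left (hgb z (hre (sphere_subset_closedBall hz)))
            (by positivity)
      _ ≤ A * (exp (max ((n + 1) / 4) (log B + 3 + (n + 1) * log (B - 1))) *
            ∏ j ∈ range (n + 1), ‖z - j‖) := by
          refine mul_le_mul_of_nonneg_left (hsphere.trans ?_) hA
          gcongr
          · linarith
      _ = _ := by ring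

theorem isBigO_fwdDiff_iter {g : ℂ → ℂ} (hg : DifferentiableOn ℂ g {z : ℂ | -1 ≤ z.re})
    {A B : ℝ} (hB : 1 < B)
    (hgb : ∀ z : ℂ, -1 ≤ z.re → ‖g z‖ ≤ A * B ^ ((z.re + ‖z‖) / 2)) :
    (fun n : ℕ => Δ_[1] ^[n] g 0) =O[atTop]
      fun n : ℕ => (n : ℝ) * max (exp (1 / 4)) (B - 1) ^ n := by
  set ρ := max (exp (1 / 4)) (B - 1)
  have hB1 : 0 < B - 1 := by linarith
  have hρ : 0 < ρ := lt_max_of_lt_left (exp_pos _)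
  have hA : 0 ≤ A := by simpa using (norm_nonneg _).trans (hgb 0 (by simp))
  refine IsBigO.of_bound ((B / (B - 1) + 1) / 2 * (A * (B * exp 3 * ρ))) ?_
  filter_upwards [eventually_gt_atTop ⌈B - 1⌉₊] with n hn
  have hn : B - 1 < n := Nat.lt_of_ceil_lt hn
  have hn1 : (1 : ℝ) ≤ n := Nat.one_le_cast.2 (Nat.cast_pos.1 (hB1.trans hn))
  have hρpow : ∀ r : ℝ, 0 ≤ r → r ≤ ρ → r ^ (n + 1) ≤ B * exp 3 * ρ ^ (n + 1) :=
    fun r hr0 hr => (pow_le_pow_left₀ hr0 hr _).trans (le_mul_of_one_le_left (by positivity)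
      (one_le_mul_of_one_le_of_one_le hB.le (one_le_exp (by norm_num))))
  have hmax : exp (max ((n + 1) / 4) (log B + 3 + (n + 1) * log (B - 1))) ≤
      B * exp 3 * ρ ^ (n + 1) := by
    rw [exp_monotone.map_max]
    refine max_le ?_ ?_
    · rw [show ((n : ℝ) + 1) / 4 = ((n + 1 : ℕ) : ℝ) * (1 / 4) by push_cast; ring,
        exp_nat_mul]
      exact hρpow _ (exp_pos _).le (le_max_left _ _)
    · rw [exp_add, exp_add, exp_log (by linarith), ← Nat.cast_add_one, exp_nat_mul, exp_log hB1]
      exact mul_le_mul_of_nonneg_left (pow_le_pow_left₀ hB1.le (le_max_right _ _) _)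
        (by positivity)
  have hradius : (n * B / (B - 1) + 1) / 2 ≤ (B / (B - 1) + 1) / 2 * n := by
    rw [mul_div_assoc]; nlinarith [div_pos (by linarith : (0:ℝ) < B) hB1]
  rw [Real.norm_of_nonneg (by positivity)]
  calc ‖Δ_[1] ^[n] g 0‖ ≤ (n * B / (B - 1) + 1) / 2 * (A * (B * exp 3 * ρ ^ (n + 1))) :=
        (norm_fwdDiff_iter_le hg hB hgb hn).trans (by gcongr)
    _ ≤ (B / (B - 1) + 1) / 2 * n * (A * (B * exp 3 * ρ ^ (n + 1))) := by gcongr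
    _ = _ := by ring

theorem eventually_norm_fwdDiff_iter_le {g : ℂ → ℂ}
    (hg : DifferentiableOn ℂ g {z : ℂ | -1 ≤ z.re}) {A B : ℝ} (hB : 1 < B)
    (hgb : ∀ z : ℂ, -1 ≤ z.re → ‖g z‖ ≤ A * B ^ ((z.re + ‖z‖) / 2)) {c : ℝ}
    (hc : max (exp (1 / 4)) (B - 1) < c) :
    ∀ᶠ n in atTop, ‖Δ_[1] ^[n] g 0‖ ≤ c ^ n := by
  have hρ : 0 < max (exp (1 / 4)) (B - 1) := lt_max_of_lt_left (exp_pos _)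
  have hlittle := isLittleO_pow_const_mul_const_pow_const_pow_of_norm_lt 1
    ((Real.norm_of_nonneg hρ.le).trans_lt hc)
  simp only [pow_one] at hlittle
  filter_upwards [((isBigO_fwdDiff_iter hg hB hgb).trans_isLittleO hlittle).bound one_pos] with n hn
  rwa [one_mul, Real.norm_of_nonneg (pow_nonneg (hρ.trans hc).le _)] at hn

lemma rpow_add_mul_norm_le {C ε B : ℝ} (hC : 0 < C) (hε0 : 0 ≤ ε) (hε1 : ε ≤ 1)
    (hB : 1 ≤ B) (hCB : C ^ (1 + ε) ≤ B) {z : ℂ} (hz : -2 ≤ z.re) :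
    C ^ (z.re + ε * ‖z‖) ≤ max 1 (C ^ (-2 : ℝ)) * B ^ ((z.re + ‖z‖) / 2) := by
  have hs : 0 ≤ (z.re + ‖z‖) / 2 := by linarith [neg_abs_le z.re, Complex.abs_re_le_norm z]
  rcases le_or_gt 1 C with hC1 | hC1
  · calc C ^ (z.re + ε * ‖z‖) ≤ C ^ ((1 + ε) * ((z.re + ‖z‖) / 2)) :=
          rpow_le_rpow_of_exponent_le hC1 (by nlinarith [Complex.re_le_norm z])
      _ = (C ^ (1 + ε)) ^ ((z.re + ‖z‖) / 2) := rpow_mul hC.le _ _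
      _ ≤ B ^ ((z.re + ‖z‖) / 2) := rpow_le_rpow (by positivity) hCB hs
      _ ≤ _ := le_mul_of_one_le_left (by positivity) (le_max_left _ _)
  · calc C ^ (z.re + ε * ‖z‖) ≤ C ^ (-2 : ℝ) :=
          rpow_le_rpow_of_exponent_ge hC hC1.le (by nlinarith [norm_nonneg z])
      _ ≤ max 1 (C ^ (-2 : ℝ)) := le_max_right _ _
      _ ≤ _ := le_mul_of_one_le_right (by positivity) (one_le_rpow hB hs)

theorem stmt17 (k : ℕ) (hk : 1 ≤ k) (g : ℂ → ℂ)
    (hg : DifferentiableOn ℂ g {z : ℂ | -2 < z.re})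
    (ε C : ℝ) (hε : 0 < ε) (hε1 : ε < 1) (hC : 0 < C)
    (hbd : ∀ z : ℂ, -2 < z.re → ‖g z‖ ≤ C ^ (z.re + ε * ‖z‖))
    (hCk : C ^ ((1 : ℝ) + ε) < Real.exp (harmonic' k) + 1) :
    ∃ Cstar : ℝ, 0 < Cstar ∧ Cstar < Real.exp (harmonic' k) ∧
      ∃ N : ℕ, ∀ n : ℕ, N ≤ n → ‖cfwdD^[n] g 0‖ ≤ Cstar ^ n := by
  have hharmonic : 1 ≤ harmonic' k := by
    simpa [harmonic'] using single_le_sum (f := fun j : ℕ => 1 / (j : ℝ))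
      (fun j _ => by positivity) (mem_Icc.2 ⟨le_rfl, hk⟩)
  have he : exp 1 ≤ exp (harmonic' k) := exp_le_exp.2 hharmonic
  set B := max (C ^ (1 + ε)) 2
  have hrate : max (exp (1 / 4)) (B - 1) < exp (harmonic' k) := by
    refine max_lt ((exp_lt_exp.2 (by norm_num)).trans_le he) ?_
    rw [sub_lt_iff_lt_add]
    exact max_lt hCk (by linarith [one_lt_exp_iff.2 (by linarith : 0 < harmonic' k)])
  obtain ⟨c, hρc, hcE⟩ := exists_between hrate
  have hgb : ∀ z : ℂ, -1 ≤ z.re →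
      ‖g z‖ ≤ max 1 (C ^ (-2 : ℝ)) * B ^ ((z.re + ‖z‖) / 2) :=
    fun z hz => (hbd z (by linarith)).trans <| rpow_add_mul_norm_le hC hε.le hε1.le
      (le_max_of_le_right one_le_two) (le_max_left _ _) (by linarith)
  obtain ⟨N, hN⟩ := eventually_atTop.1 <| eventually_norm_fwdDiff_iter_le
    (hg.mono fun z (hz : -1 ≤ z.re) => show -2 < z.re by linarith)
    (lt_max_of_lt_right one_lt_two) hgb hρc
  have hcfwdD : cfwdD = Δ_[1] := rfl
  exact ⟨c, (exp_pos _).trans_le (le_max_left _ _) |>.trans hρc, hcE, N, hcfwdD ▸ hN⟩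
end

section
/- Let k ≥ 1 be an integer and set γ_k = ∑_{j=1}^{k} 1/j. Then there exists a real c > 0 such that for every positive integer n, n! / ∏_{m=0}^{n} ((1 + e^{−γ_k})·n − m) ≤ c · e^{γ_k·n} / (e^{γ_k} + 1)^{(1 + e^{−γ_k})·n}. -/
open Real
open scoped Nat

theorem rpow_mul_one_sub_rpow_le {a b t : ℝ} (ha : 0 < a) (hb : 0 < b) (ht₀ : 0 ≤ t)
    (ht₁ : t ≤ 1) : t ^ a * (1 - t) ^ b ≤ a ^ a * b ^ b / (a + b) ^ (a + b) := by
  set s := a + b with hs_def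
  have hs : 0 < s := by positivity
  have ht₁' : 0 ≤ 1 - t := by linarith
  have hamgm : (t * s / a) ^ (a / s) * ((1 - t) * s / b) ^ (b / s) ≤ 1 :=
    calc _ ≤ a / s * (t * s / a) + b / s * ((1 - t) * s / b) :=
          geom_mean_le_arith_mean2_weighted (by positivity) (by positivity)
            (by positivity) (by positivity) (by rw [← add_div, div_self hs.ne'])
      _ = 1 := by field_simp; ring
  have key : (t * s / a) ^ a * ((1 - t) * s / b) ^ b ≤ 1 := by
    have h := rpow_le_one (by positivity) hamgm hs.le
    rwa [mul_rpow (by positivity) (by positivity), ← rpow_mul (by positivity),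
      ← rpow_mul (by positivity), div_mul_cancel₀ _ hs.ne', div_mul_cancel₀ _ hs.ne'] at h
  rw [div_rpow (by positivity) ha.le, div_rpow (by positivity) hb.le,
    mul_rpow ht₀ hs.le, mul_rpow ht₁' hs.le] at key
  rw [le_div_iff₀ (by positivity), hs_def, rpow_add hs]
  rw [div_mul_div_comm, div_le_one (by positivity)] at key
  linarith

theorem factorial_div_prod_add_one_le {x : ℝ} (hx : 0 < x) {n : ℕ} (hn : 0 < n) :
    (n ! : ℝ) / ∏ j ∈ Finset.range (n + 1), (x + 1 + j)
      ≤ x ^ x * (n : ℝ) ^ (n : ℝ) / (x + n) ^ (x + n) := by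
  have hB := Complex.betaIntegral_eval_nat_add_one_right (u := (x : ℂ) + 1)
    (by simp; linarith) n
  have hcast : ((n ! / ∏ j ∈ Finset.range (n + 1), (x + 1 + j) : ℝ) : ℂ)
      = Complex.betaIntegral (x + 1) (n + 1) := by
    rw [hB]; push_cast; rfl
  have hpos : 0 ≤ (n ! : ℝ) / ∏ j ∈ Finset.range (n + 1), (x + 1 + j) := by positivity
  rw [← Real.norm_of_nonneg hpos, ← Complex.norm_real, hcast, Complex.betaIntegral]
  simp only [add_sub_cancel_right, Complex.cpow_natCast]
  refine (intervalIntegral.norm_integral_le_of_norm_le_const fun t ht => ?_).trans_eq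
    (by rw [sub_zero, abs_one, mul_one])
  rw [Set.uIoc_of_le zero_le_one] at ht
  have h1t : 0 ≤ 1 - t := by linarith [ht.2]
  rw [norm_mul, Complex.norm_cpow_eq_rpow_re_of_pos ht.1, norm_pow, ← Complex.ofReal_one,
    ← Complex.ofReal_sub, Complex.norm_real, Real.norm_of_nonneg h1t, Complex.ofReal_re,
    ← rpow_natCast]
  exact rpow_mul_one_sub_rpow_le hx (by positivity) ht.1.le ht.2

theorem factorial_div_prod_add_le {x : ℝ} (hx : 0 < x) {n : ℕ} (hn : 0 < n) :
    (n ! : ℝ) / ∏ j ∈ Finset.range (n + 1), (x + j)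
      ≤ (x + n + 1) / x * (x ^ x * (n : ℝ) ^ (n : ℝ) / (x + n) ^ (x + n)) := by
  have hshift : (∏ j ∈ Finset.range (n + 1), (x + j)) * (x + n + 1)
      = x * ∏ j ∈ Finset.range (n + 1), (x + 1 + j) := by
    have hsucc := Finset.prod_range_succ' (fun j : ℕ => x + j) (n + 1)
    rw [Finset.prod_range_succ] at hsucc
    push_cast at hsucc
    rw [show x + n + 1 = x + (n + 1) by ring, hsucc, mul_comm, add_zero]
    simp only [add_assoc, add_comm (1 : ℝ)]
  calc (n ! : ℝ) / ∏ j ∈ Finset.range (n + 1), (x + j)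
      = (x + n + 1) / x * ((n ! : ℝ) / ∏ j ∈ Finset.range (n + 1), (x + 1 + j)) := by
        rw [div_mul_div_comm, ← hshift]; field_simp
    _ ≤ _ := mul_le_mul_of_nonneg_left (factorial_div_prod_add_one_le hx hn) (by positivity)

theorem factorial_div_prod_le {α : ℝ} (hα : 0 < α) {n : ℕ} (hn : 0 < n) :
    (n ! : ℝ) / ∏ m ∈ Finset.range (n + 1), ((1 + α) * n - m)
      ≤ (2 + α) / α * (α ^ (α * n) / (1 + α) ^ ((1 + α) * n)) := by
  have hn' : (1 : ℝ) ≤ n := by exact_mod_cast hn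
  have hreflect : ∏ m ∈ Finset.range (n + 1), ((1 + α) * n - m)
      = ∏ j ∈ Finset.range (n + 1), (α * n + j) := by
    rw [← Finset.prod_range_reflect]
    refine Finset.prod_congr rfl fun j hj => ?_
    rw [add_tsub_cancel_right, Nat.cast_sub (by simpa [Nat.lt_succ_iff] using hj)]
    ring
  have hpow : (α * n) ^ (α * n) * (n : ℝ) ^ (n : ℝ) / (α * n + n) ^ (α * n + n)
      = α ^ (α * n) / (1 + α) ^ ((1 + α) * n) := by
    rw [show α * n + n = (1 + α) * n by ring, mul_rpow hα.le (by positivity),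
      mul_rpow (by positivity) (by positivity), mul_assoc, ← rpow_add (by positivity),
      show α * n + n = (1 + α) * n by ring, mul_div_mul_right _ _ (by positivity)]
  rw [hreflect, ← hpow]
  refine (factorial_div_prod_add_le (by positivity) hn).trans ?_
  refine mul_le_mul_of_nonneg_right ?_ (by positivity)
  rw [div_le_div_iff₀ (by positivity) hα]
  nlinarith

theorem exp_mul_div_exp_add_one_rpow (γ y : ℝ) :
    exp (γ * y) / (exp γ + 1) ^ ((1 + exp (-γ)) * y)
      = exp (-γ) ^ (exp (-γ) * y) / (1 + exp (-γ)) ^ ((1 + exp (-γ)) * y) := by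
  have hsplit : exp γ + 1 = exp γ * (1 + exp (-γ)) := by
    rw [mul_add, mul_one, ← exp_add, add_neg_cancel, exp_zero]
  rw [hsplit, mul_rpow (exp_pos γ).le (by positivity), ← div_div, ← exp_mul, ← exp_mul,
    ← exp_sub]
  congr 2
  ring

theorem stmt18_general (k : ℕ) :
    ∃ c : ℝ, 0 < c ∧ ∀ n : ℕ, 1 ≤ n →
      (Nat.factorial n : ℝ) /
          (∏ m ∈ Finset.range (n + 1), ((1 + Real.exp (-harmonic' k)) * n - m)) ≤
        c * Real.exp (harmonic' k * n) /
          (Real.exp (harmonic' k) + 1) ^ ((1 + Real.exp (-harmonic' k)) * n) := by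
  have hα : 0 < exp (-harmonic' k) := exp_pos _
  refine ⟨(2 + exp (-harmonic' k)) / exp (-harmonic' k), by positivity, fun n hn => ?_⟩
  rw [mul_div_assoc, exp_mul_div_exp_add_one_rpow]
  exact factorial_div_prod_le hα hn

theorem stmt18 (k : ℕ) (hk : 1 ≤ k) :
    ∃ c : ℝ, 0 < c ∧ ∀ n : ℕ, 1 ≤ n →
      (Nat.factorial n : ℝ) /
          (∏ m ∈ Finset.range (n + 1), ((1 + Real.exp (-harmonic' k)) * n - m)) ≤
        c * Real.exp (harmonic' k * n) /
          (Real.exp (harmonic' k) + 1) ^ ((1 + Real.exp (-harmonic' k)) * n) :=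
  stmt18_general k
end
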